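/- arXiv:2202.04465 — 3 statements merged into one kernel-verified Lean document; each statement's English description precedes it below -/
import Mathlib

section
/- Let (X, C) be an instance of 3X3C with |X| = 3q, C = {C_1, …, C_p}, p = 3q, and let D = 2p² + p/3 + 1. Consider the allocation instance with items V = X ∪ {h_1, …, h_{3D−2}} ∪ {1, …, p} ∪ {e} and agents A_1, …, A_{3D−2}, B, C_1, …, C_p, whose preference graphs are the following out-trees, where path_a is a fixed ordering of X ∪ {1,…,p}, path_b a fixed ordering of X, and path_j a fixed ordering of (X \ C_j) ∪ ({1,…,p} \ {j}): for 1 ≤ r ≤ 3D−3, agent A_r has root h_r with arcs (h_r, h_s) for all s ≠ r with 1 ≤ s ≤ 3D−2, followed by a directed path from h_{3D−2} through the items of path_a in order ending at e; agent A_{3D−2} has root h_{3D−2} with arcs to h_1, …, h_{3D−3}, followed by a directed path from h_{3D−3} through path_a ending at e; agent B has root h_{3D−2} with children 1, …, p and e, where from each child j (1 ≤ j ≤ p) hangs a directed path through h_{(j−1)(3p−1)+1}, …, h_{j(3p−1)}, and from e hangs a directed path through h_{p(3p−1)+1}, …, h_{3D−3} followed by path_b; and each agent C_j, with C_j = {x,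 y, z}, has root j with children x, y, z, where from x hangs a directed path through h_1, …, h_{D−1}, from y a directed path through h_D, …, h_{2D−2}, and from z a directed path through h_{2D−1}, …, h_{3D−3}, then h_{3D−2}, then path_j, ending at e. Then C contains an exact cover of X if and only if there exists an allocation π with total dissatisfaction Σ_i δ_π(i) ≤ D. -/
/-- Item `u` dominates item `v`: `u = v` or there is a directed path from `u` to `v`
along the arcs in `A`. -/
def Dominates {α : Type*} (A : Set (α × α)) (u v : α) : Prop :=
  Relation.ReflTransGen (fun a b => (a, b) ∈ A) u v

/-- The dissatisfaction of an agent with approved item set `Vi`, arc set `A`,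
receiving the set of items `P`. -/
noncomputable def dissat {α : Type*} (Vi : Set α) (A : Set (α × α)) (P : Set α) : ℕ :=
  Set.ncard {v | v ∈ Vi ∧ ¬ ∃ u, u ∈ P ∧ u ∈ Vi ∧ Dominates A u v}

/-- The satisfaction of an agent with approved item set `Vi`, arc set `A`,
receiving the set of items `P`. -/
noncomputable def satis {α : Type*} (Vi : Set α) (A : Set (α × α)) (P : Set α) : ℕ :=
  Set.ncard {v | v ∈ Vi ∧ ∃ u, u ∈ P ∧ u ∈ Vi ∧ Dominates A u v}

/-- An allocation assigns pairwise disjoint sets of items to the agents. -/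
def IsAllocation {ι α : Type*} (π : ι → Set α) : Prop :=
  Pairwise fun i j => Disjoint (π i) (π j)

/-- The arc set is acyclic (directed acyclic graph). -/
def Acyclic {α : Type*} (A : Set (α × α)) : Prop :=
  ∀ v : α, ¬ Relation.TransGen (fun a b => (a, b) ∈ A) v v

/-- `D = 2p² + p/3 + 1` with `p = 3q`. -/
def s13D (q : ℕ) : ℕ := 18*q*q + q + 1

/-- The number `3D - 2` of items `h_1, …, h_{3D-2}`. -/
def s13H (q : ℕ) : ℕ := 54*q*q + 3*q + 1

instance (q : ℕ) : NeZero (s13H q) := ⟨by unfold s13H; omega⟩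

/-- Items of the reduction: the elements of `X`, the items `h_1, …, h_{3D-2}`
(indexed by `Fin (3D-2)`, with `h_t` at index `t-1`), the items `1, …, p`
(indexed by `Fin (3q)`), and the item `e`. -/
abbrev S13Itm (q : ℕ) (X : Type*) : Type _ := X ⊕ Fin (s13H q) ⊕ Fin (3*q) ⊕ Unit

/-- Agents of the reduction: `A_1, …, A_{3D-2}`, agent `B`, and `C_1, …, C_p`. -/
abbrev S13Agt (q : ℕ) : Type := Fin (s13H q) ⊕ Unit ⊕ Fin (3*q)

def s13x (q : ℕ) {X : Type*} (v : X) : S13Itm q X := Sum.inl v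
open Fin.NatCast in
def s13h (q : ℕ) {X : Type*} (t : ℕ) : S13Itm q X := Sum.inr (Sum.inl (t : Fin (s13H q)))
def s13j (q : ℕ) {X : Type*} (i : Fin (3*q)) : S13Itm q X := Sum.inr (Sum.inr (Sum.inl i))
def s13e (q : ℕ) {X : Type*} : S13Itm q X := Sum.inr (Sum.inr (Sum.inr ()))
def s13emb (q : ℕ) {X : Type*} : X ⊕ Fin (3*q) → S13Itm q X :=
  Sum.elim (s13x q) (s13j q)

/-- Arc sets of the preference out-trees (each contains all items, so each vertex set is
`Set.univ`).  Here `pa` enumerates `path_a` (an ordering of `X ∪ {1, …, p}`, of length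
`2p = 6q`), `pb` enumerates `path_b` (an ordering of `X`, of length `3q`), `pc j`
enumerates `path_j` (an ordering of `(X \ C_j) ∪ ({1, …, p} \ {j})`, of length `6q - 4`),
and `cx j, cy j, cz j` are the three elements of `C_j`.  All the `h`-indices are
0-based: index `t` corresponds to `h_{t+1}`. -/
def s13Arcs (q : ℕ) {X : Type*}
    (pa : ℕ → X ⊕ Fin (3*q)) (pb : ℕ → X) (pc : Fin (3*q) → ℕ → X ⊕ Fin (3*q))
    (cx cy cz : Fin (3*q) → X) :
    S13Agt q → Set (S13Itm q X × S13Itm q X)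
  | .inl r =>
      {pr | (∃ s : Fin (s13H q), s ≠ r ∧ pr = (s13h q (r : ℕ), s13h q (s : ℕ))) ∨
            pr = (s13h q (if (r : ℕ) = s13H q - 1 then s13H q - 2 else s13H q - 1),
                  s13emb q (pa 0)) ∨
            (∃ t, t + 1 < 6*q ∧ pr = (s13emb q (pa t), s13emb q (pa (t+1)))) ∨
            pr = (s13emb q (pa (6*q - 1)), s13e q)}
  | .inr (.inl _) =>
      {pr | (∃ i : Fin (3*q), pr = (s13h q (s13H q - 1), s13j q i)) ∨
            pr = (s13h q (s13H q - 1), s13e q) ∨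
            (∃ i : Fin (3*q), pr = (s13j q i, s13h q ((i : ℕ) * (9*q - 1)))) ∨
            (∃ (i : Fin (3*q)) (t : ℕ), (i : ℕ) * (9*q - 1) ≤ t ∧
              t + 1 < ((i : ℕ) + 1) * (9*q - 1) ∧ pr = (s13h q t, s13h q (t+1))) ∨
            pr = (s13e q, s13h q (3*q * (9*q - 1))) ∨
            (∃ t, 3*q * (9*q - 1) ≤ t ∧ t + 1 ≤ s13H q - 2 ∧
              pr = (s13h q t, s13h q (t+1))) ∨
            pr = (s13h q (s13H q - 2), s13x q (pb 0)) ∨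
            (∃ t, t + 1 < 3*q ∧ pr = (s13x q (pb t), s13x q (pb (t+1))))}
  | .inr (.inr c) =>
      {pr | pr = (s13j q c, s13x q (cx c)) ∨ pr = (s13j q c, s13x q (cy c)) ∨
            pr = (s13j q c, s13x q (cz c)) ∨
            pr = (s13x q (cx c), s13h q 0) ∨
            (∃ t, t + 1 ≤ s13D q - 2 ∧ pr = (s13h q t, s13h q (t+1))) ∨
            pr = (s13x q (cy c), s13h q (s13D q - 1)) ∨
            (∃ t, s13D q - 1 ≤ t ∧ t + 1 ≤ 2 * s13D q - 3 ∧
              pr = (s13h q t, s13h q (t+1))) ∨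
            pr = (s13x q (cz c), s13h q (2 * s13D q - 2)) ∨
            (∃ t, 2 * s13D q - 2 ≤ t ∧ t + 1 ≤ s13H q - 2 ∧
              pr = (s13h q t, s13h q (t+1))) ∨
            pr = (s13h q (s13H q - 2), s13h q (s13H q - 1)) ∨
            pr = (s13h q (s13H q - 1), s13emb q (pc c 0)) ∨
            (∃ t, t + 1 < 6*q - 4 ∧ pr = (s13emb q (pc c t), s13emb q (pc c (t+1)))) ∨
            pr = (s13emb q (pc c (6*q - 5)), s13e q)}

section Generic
variable {α β : Type*} {A : Set (α × α)} {P W : Set α}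

lemma dom_closed (hW : ∀ p ∈ A, p.2 ∈ W → p.1 ∈ W) :
    ∀ {u v}, Dominates A u v → v ∈ W → u ∈ W := by
  intro u v h
  induction h with
  | refl => exact fun hv => hv
  | tail _ harc ih => exact fun hv => ih (hW _ harc hv)

lemma dom_chain (f : ℕ → α) {a b : ℕ} (hab : a ≤ b)
    (h : ∀ t, a ≤ t → t < b → (f t, f (t+1)) ∈ A) : Dominates A (f a) (f b) := by
  induction b, hab using Nat.le_induction with
  | base => exact Relation.ReflTransGen.refl
  | succ b hab ih =>
      exact (ih (fun t h1 h2 => h t h1 (by omega))).tail (h b hab (by omega))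

lemma dom_arc {u v : α} (h : (u, v) ∈ A) : Dominates A u v :=
  Relation.ReflTransGen.single h

lemma dissat_univ : dissat Set.univ A P =
    Set.ncard {v | ¬ ∃ u ∈ P, Dominates A u v} := by
  unfold dissat
  congr 1
  ext v
  simp [Set.mem_univ]

lemma dissat_le_card [Finite α] (f : β → α) (T : Finset β)
    (h : ∀ v : α, (¬ ∃ u ∈ P, Dominates A u v) → ∃ b ∈ T, f b = v) :
    dissat Set.univ A P ≤ T.card := by
  rw [dissat_univ]
  calc Set.ncard {v | ¬ ∃ u ∈ P, Dominates A u v}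
      ≤ Set.ncard (f '' ↑T) := by
        apply Set.ncard_le_ncard _ (Set.toFinite _)
        intro v hv
        obtain ⟨b, hb, rfl⟩ := h v hv
        exact ⟨b, by simpa using hb, rfl⟩
    _ ≤ Set.ncard (↑T : Set β) := Set.ncard_image_le (Set.toFinite _)
    _ = T.card := Set.ncard_coe_finset T

lemma card_le_dissat [Finite α] (g : β → α) (T : Finset β)
    (hinj : Set.InjOn g ↑T)
    (h : ∀ b ∈ T, ¬ ∃ u ∈ P, Dominates A u (g b)) :
    T.card ≤ dissat Set.univ A P := by
  rw [dissat_univ]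
  calc T.card = Set.ncard (g '' ↑T) := by
        rw [Set.ncard_image_of_injOn hinj, Set.ncard_coe_finset]
    _ ≤ _ := by
        apply Set.ncard_le_ncard _ (Set.toFinite _)
        rintro v ⟨b, hb, rfl⟩
        exact h b (by simpa using hb)

lemma dissat_eq_zero (h : ∀ v : α, ∃ u ∈ P, Dominates A u v) :
    dissat Set.univ A P = 0 := by
  rw [dissat_univ]
  convert Set.ncard_empty α using 2
  ext v
  simpa using h v

lemma unique_limb {n a a' i i' : ℕ} (ha : a < n) (ha' : a' < n)
    (h : i * n + a = i' * n + a') : i = i' ∧ a = a' := by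
  rcases lt_trichotomy i i' with hlt | heq | hlt
  · have := Nat.mul_le_mul_right n (show i + 1 ≤ i' by omega)
    rw [Nat.succ_mul] at this
    omega
  · subst heq; omega
  · have := Nat.mul_le_mul_right n (show i' + 1 ≤ i by omega)
    rw [Nat.succ_mul] at this
    omega

end Generic

section Items
variable {q : ℕ} {X : Type*}

@[simp] lemma s13h_val (s : Fin (s13H q)) : s13h q (s : ℕ) = (Sum.inr (Sum.inl s) : S13Itm q X) := by
  simp [s13h, Fin.cast_val_eq_self]

lemma s13h_inj {a b : ℕ} (ha : a < s13H q) (hb : b < s13H q)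
    (h : (s13h q a : S13Itm q X) = s13h q b) : a = b := by
  simp only [s13h, Sum.inr.injEq, Sum.inl.injEq] at h
  have := congrArg Fin.val h
  rwa [Fin.val_cast_of_lt ha, Fin.val_cast_of_lt hb] at this

@[simp] lemma s13h_ne_x {t : ℕ} {x : X} : (s13h q t : S13Itm q X) ≠ s13x q x := by
  simp [s13h, s13x]
@[simp] lemma s13x_ne_h {t : ℕ} {x : X} : (s13x q x : S13Itm q X) ≠ s13h q t := by
  simp [s13h, s13x]
@[simp] lemma s13h_ne_j {t : ℕ} {i : Fin (3*q)} : (s13h q t : S13Itm q X) ≠ s13j q i := by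
  simp [s13h, s13j]
@[simp] lemma s13j_ne_h {t : ℕ} {i : Fin (3*q)} : (s13j q i : S13Itm q X) ≠ s13h q t := by
  simp [s13h, s13j]
@[simp] lemma s13h_ne_e {t : ℕ} : (s13h q t : S13Itm q X) ≠ s13e q := by
  simp [s13h, s13e]
@[simp] lemma s13e_ne_h {t : ℕ} : (s13e q : S13Itm q X) ≠ s13h q t := by
  simp [s13h, s13e]
@[simp] lemma s13x_ne_j {x : X} {i : Fin (3*q)} : (s13x q x : S13Itm q X) ≠ s13j q i := by
  simp [s13x, s13j]
@[simp] lemma s13j_ne_x {x : X} {i : Fin (3*q)} : (s13j q i : S13Itm q X) ≠ s13x q x := by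
  simp [s13x, s13j]
@[simp] lemma s13x_ne_e {x : X} : (s13x q x : S13Itm q X) ≠ s13e q := by
  simp [s13x, s13e]
@[simp] lemma s13e_ne_x {x : X} : (s13e q : S13Itm q X) ≠ s13x q x := by
  simp [s13x, s13e]
@[simp] lemma s13j_ne_e {i : Fin (3*q)} : (s13j q i : S13Itm q X) ≠ s13e q := by
  simp [s13j, s13e]
@[simp] lemma s13e_ne_j {i : Fin (3*q)} : (s13e q : S13Itm q X) ≠ s13j q i := by
  simp [s13j, s13e]
@[simp] lemma s13x_inj {x y : X} : (s13x q x : S13Itm q X) = s13x q y ↔ x = y := by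
  simp [s13x]
@[simp] lemma s13j_inj {i i' : Fin (3*q)} : (s13j q i : S13Itm q X) = s13j q i' ↔ i = i' := by
  simp [s13j]
@[simp] lemma s13emb_inl {x : X} : (s13emb q (Sum.inl x) : S13Itm q X) = s13x q x := rfl
@[simp] lemma s13emb_inr {i : Fin (3*q)} : (s13emb q (Sum.inr i) : S13Itm q X) = s13j q i := rfl

lemma s13emb_ne_h {u : X ⊕ Fin (3*q)} {t : ℕ} : (s13emb q u : S13Itm q X) ≠ s13h q t := by
  cases u <;> simp
lemma s13emb_ne_e {u : X ⊕ Fin (3*q)} : (s13emb q u : S13Itm q X) ≠ s13e q := by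
  cases u <;> simp
lemma s13emb_eq_x {u : X ⊕ Fin (3*q)} {x : X} :
    (s13emb q u : S13Itm q X) = s13x q x ↔ u = Sum.inl x := by
  cases u <;> simp
lemma s13emb_eq_j {u : X ⊕ Fin (3*q)} {i : Fin (3*q)} :
    (s13emb q u : S13Itm q X) = s13j q i ↔ u = Sum.inr i := by
  cases u <;> simp

end Items


section Arcs
variable {q : ℕ} {X : Type*} {pa : ℕ → X ⊕ Fin (3*q)} {pb : ℕ → X}
  {pc : Fin (3*q) → ℕ → X ⊕ Fin (3*q)} {cx cy cz : Fin (3*q) → X}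

lemma arcsA_cases (r : Fin (s13H q)) {u w : S13Itm q X}
    (h : (u, w) ∈ s13Arcs q pa pb pc cx cy cz (.inl r)) :
    (u = s13h q (r : ℕ) ∧ ∃ s : Fin (s13H q), s ≠ r ∧ w = s13h q (s : ℕ)) ∨
    (u = s13h q (if (r : ℕ) = s13H q - 1 then s13H q - 2 else s13H q - 1) ∧
      w = s13emb q (pa 0)) ∨
    (∃ t, t + 1 < 6*q ∧ u = s13emb q (pa t) ∧ w = s13emb q (pa (t+1))) ∨
    (u = s13emb q (pa (6*q - 1)) ∧ w = s13e q) := by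
  simp only [s13Arcs, Set.mem_setOf_eq, Prod.mk.injEq] at h
  rcases h with ⟨s,hs,h1,h2⟩|⟨h1,h2⟩|⟨t,ht,h1,h2⟩|⟨h1,h2⟩
  · exact Or.inl ⟨h1, s, hs, h2⟩
  · exact Or.inr (Or.inl ⟨h1, h2⟩)
  · exact Or.inr (Or.inr (Or.inl ⟨t, ht, h1, h2⟩))
  · exact Or.inr (Or.inr (Or.inr ⟨h1, h2⟩))

lemma arcsB_cases {b : Unit} {u w : S13Itm q X}
    (h : (u, w) ∈ s13Arcs q pa pb pc cx cy cz (.inr (.inl b))) :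
    (u = s13h q (s13H q - 1) ∧ ∃ i : Fin (3*q), w = s13j q i) ∨
    (u = s13h q (s13H q - 1) ∧ w = s13e q) ∨
    (∃ i : Fin (3*q), u = s13j q i ∧ w = s13h q ((i : ℕ) * (9*q - 1))) ∨
    (∃ (i : Fin (3*q)) (t : ℕ), (i : ℕ) * (9*q - 1) ≤ t ∧ t + 1 < ((i : ℕ) + 1) * (9*q - 1) ∧
      u = s13h q t ∧ w = s13h q (t+1)) ∨
    (u = s13e q ∧ w = s13h q (3*q * (9*q - 1))) ∨
    (∃ t, 3*q * (9*q - 1) ≤ t ∧ t + 1 ≤ s13H q - 2 ∧ u = s13h q t ∧ w = s13h q (t+1)) ∨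
    (u = s13h q (s13H q - 2) ∧ w = s13x q (pb 0)) ∨
    (∃ t, t + 1 < 3*q ∧ u = s13x q (pb t) ∧ w = s13x q (pb (t+1))) := by
  simp only [s13Arcs, Set.mem_setOf_eq, Prod.mk.injEq] at h
  rcases h with ⟨i,h1,h2⟩|⟨h1,h2⟩|⟨i,h1,h2⟩|⟨i,t,ht1,ht2,h1,h2⟩|⟨h1,h2⟩|⟨t,ht1,ht2,h1,h2⟩|
    ⟨h1,h2⟩|⟨t,ht,h1,h2⟩
  · exact Or.inl ⟨h1, i, h2⟩
  · exact Or.inr (Or.inl ⟨h1, h2⟩)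
  · exact Or.inr (Or.inr (Or.inl ⟨i, h1, h2⟩))
  · exact Or.inr (Or.inr (Or.inr (Or.inl ⟨i, t, ht1, ht2, h1, h2⟩)))
  · exact Or.inr (Or.inr (Or.inr (Or.inr (Or.inl ⟨h1, h2⟩))))
  · exact Or.inr (Or.inr (Or.inr (Or.inr (Or.inr (Or.inl ⟨t, ht1, ht2, h1, h2⟩)))))
  · exact Or.inr (Or.inr (Or.inr (Or.inr (Or.inr (Or.inr (Or.inl ⟨h1, h2⟩))))))
  · exact Or.inr (Or.inr (Or.inr (Or.inr (Or.inr (Or.inr (Or.inr ⟨t, ht, h1, h2⟩))))))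

lemma arcsC_cases (hq : 1 ≤ q) (c : Fin (3*q)) {u w : S13Itm q X}
    (h : (u, w) ∈ s13Arcs q pa pb pc cx cy cz (.inr (.inr c))) :
    (u = s13j q c ∧ (w = s13x q (cx c) ∨ w = s13x q (cy c) ∨ w = s13x q (cz c))) ∨
    (u = s13x q (cx c) ∧ w = s13h q 0) ∨
    (u = s13x q (cy c) ∧ w = s13h q (s13D q - 1)) ∨
    (u = s13x q (cz c) ∧ w = s13h q (2 * s13D q - 2)) ∨
    (∃ s, 1 ≤ s ∧ (s ≤ s13D q - 2 ∨ (s13D q ≤ s ∧ s ≤ 2 * s13D q - 3) ∨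
        (2 * s13D q - 1 ≤ s ∧ s ≤ s13H q - 1)) ∧
      u = s13h q (s - 1) ∧ w = s13h q s) ∨
    (u = s13h q (s13H q - 1) ∧ w = s13emb q (pc c 0)) ∨
    (∃ t, t + 1 < 6*q - 4 ∧ u = s13emb q (pc c t) ∧ w = s13emb q (pc c (t+1))) ∨
    (u = s13emb q (pc c (6*q - 5)) ∧ w = s13e q) := by
  have hD : s13D q = 18*q*q + q + 1 := rfl
  have hH : s13H q = 54*q*q + 3*q + 1 := rfl
  have h3 : 54*q*q = 3*(18*q*q) := by ring
  simp only [s13Arcs, Set.mem_setOf_eq, Prod.mk.injEq] at h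
  rcases h with ⟨h1,h2⟩|⟨h1,h2⟩|⟨h1,h2⟩|⟨h1,h2⟩|⟨t,ht,h1,h2⟩|⟨h1,h2⟩|⟨t,ht1,ht2,h1,h2⟩|
    ⟨h1,h2⟩|⟨t,ht1,ht2,h1,h2⟩|⟨h1,h2⟩|⟨h1,h2⟩|⟨t,ht,h1,h2⟩|⟨h1,h2⟩
  · exact Or.inl ⟨h1, Or.inl h2⟩
  · exact Or.inl ⟨h1, Or.inr (Or.inl h2)⟩
  · exact Or.inl ⟨h1, Or.inr (Or.inr h2)⟩
  · exact Or.inr (Or.inl ⟨h1, h2⟩)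
  · refine Or.inr (Or.inr (Or.inr (Or.inr (Or.inl ⟨t+1, by omega, Or.inl (by omega),
      by simpa using h1, h2⟩))))
  · exact Or.inr (Or.inr (Or.inl ⟨h1, h2⟩))
  · refine Or.inr (Or.inr (Or.inr (Or.inr (Or.inl ⟨t+1, by omega,
      Or.inr (Or.inl (by omega)), by simpa using h1, h2⟩))))
  · exact Or.inr (Or.inr (Or.inr (Or.inl ⟨h1, h2⟩)))
  · refine Or.inr (Or.inr (Or.inr (Or.inr (Or.inl ⟨t+1, by omega,
      Or.inr (Or.inr (by omega)), by simpa using h1, h2⟩))))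
  · refine Or.inr (Or.inr (Or.inr (Or.inr (Or.inl ⟨s13H q - 1, by omega,
      Or.inr (Or.inr (by omega)),
      by rw [h1, show s13H q - 2 = s13H q - 1 - 1 from by omega], h2⟩))))
  · exact Or.inr (Or.inr (Or.inr (Or.inr (Or.inr (Or.inl ⟨h1, h2⟩)))))
  · exact Or.inr (Or.inr (Or.inr (Or.inr (Or.inr (Or.inr (Or.inl ⟨t, ht, h1, h2⟩))))))
  · exact Or.inr (Or.inr (Or.inr (Or.inr (Or.inr (Or.inr (Or.inr ⟨h1, h2⟩))))))

end Arcs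


section Dom
variable {q : ℕ} {X : Type*} {pa : ℕ → X ⊕ Fin (3*q)} {pb : ℕ → X}
  {pc : Fin (3*q) → ℕ → X ⊕ Fin (3*q)} {cx cy cz : Fin (3*q) → X}

local notation "Arcs" => s13Arcs q pa pb pc cx cy cz

lemma memA {r : Fin (s13H q)} {u w : S13Itm q X}
    (h : (∃ s : Fin (s13H q), s ≠ r ∧ (u, w) = (s13h q (r : ℕ), s13h q (s : ℕ))) ∨
      (u, w) = (s13h q (if (r : ℕ) = s13H q - 1 then s13H q - 2 else s13H q - 1),
        s13emb q (pa 0)) ∨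
      (∃ t, t + 1 < 6*q ∧ (u, w) = (s13emb q (pa t), s13emb q (pa (t+1)))) ∨
      (u, w) = (s13emb q (pa (6*q - 1)), s13e q)) :
    (u, w) ∈ Arcs (.inl r) := h

lemma memB {u w : S13Itm q X}
    (h : (∃ i : Fin (3*q), (u, w) = (s13h q (s13H q - 1), s13j q i)) ∨
      (u, w) = (s13h q (s13H q - 1), s13e q) ∨
      (∃ i : Fin (3*q), (u, w) = (s13j q i, s13h q ((i : ℕ) * (9*q - 1)))) ∨
      (∃ (i : Fin (3*q)) (t : ℕ), (i : ℕ) * (9*q - 1) ≤ t ∧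
        t + 1 < ((i : ℕ) + 1) * (9*q - 1) ∧ (u, w) = (s13h q t, s13h q (t+1))) ∨
      (u, w) = (s13e q, s13h q (3*q * (9*q - 1))) ∨
      (∃ t, 3*q * (9*q - 1) ≤ t ∧ t + 1 ≤ s13H q - 2 ∧
        (u, w) = (s13h q t, s13h q (t+1))) ∨
      (u, w) = (s13h q (s13H q - 2), s13x q (pb 0)) ∨
      (∃ t, t + 1 < 3*q ∧ (u, w) = (s13x q (pb t), s13x q (pb (t+1))))) :
    (u, w) ∈ Arcs (.inr (.inl ())) := h

lemma memC {c : Fin (3*q)} {u w : S13Itm q X}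
    (h : (u, w) = (s13j q c, s13x q (cx c)) ∨ (u, w) = (s13j q c, s13x q (cy c)) ∨
      (u, w) = (s13j q c, s13x q (cz c)) ∨
      (u, w) = (s13x q (cx c), s13h q 0) ∨
      (∃ t, t + 1 ≤ s13D q - 2 ∧ (u, w) = (s13h q t, s13h q (t+1))) ∨
      (u, w) = (s13x q (cy c), s13h q (s13D q - 1)) ∨
      (∃ t, s13D q - 1 ≤ t ∧ t + 1 ≤ 2 * s13D q - 3 ∧
        (u, w) = (s13h q t, s13h q (t+1))) ∨
      (u, w) = (s13x q (cz c), s13h q (2 * s13D q - 2)) ∨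
      (∃ t, 2 * s13D q - 2 ≤ t ∧ t + 1 ≤ s13H q - 2 ∧
        (u, w) = (s13h q t, s13h q (t+1))) ∨
      (u, w) = (s13h q (s13H q - 2), s13h q (s13H q - 1)) ∨
      (u, w) = (s13h q (s13H q - 1), s13emb q (pc c 0)) ∨
      (∃ t, t + 1 < 6*q - 4 ∧ (u, w) = (s13emb q (pc c t), s13emb q (pc c (t+1)))) ∨
      (u, w) = (s13emb q (pc c (6*q - 5)), s13e q)) :
    (u, w) ∈ Arcs (.inr (.inr c)) := h

lemma domA_h (r s : Fin (s13H q)) :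
    Dominates (Arcs (.inl r)) (s13h q (r : ℕ)) ((s13h q (s : ℕ) : S13Itm q X)) := by
  rcases eq_or_ne s r with rfl | hs
  · exact Relation.ReflTransGen.refl
  · exact dom_arc (memA (Or.inl ⟨s, hs, rfl⟩))

lemma domA_pa (r : Fin (s13H q)) {t : ℕ} (ht : t < 6*q) :
    Dominates (Arcs (.inl r)) (s13h q (r : ℕ)) ((s13emb q (pa t) : S13Itm q X)) := by
  have hH : s13H q = 54*q*q + 3*q + 1 := rfl
  induction t with
  | zero =>
      have hsplt : (if (r : ℕ) = s13H q - 1 then s13H q - 2 else s13H q - 1) < s13H q := by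
        split <;> omega
      have hspr : (⟨_, hsplt⟩ : Fin (s13H q)) ≠ r := by
        refine Fin.ne_of_val_ne ?_
        simp only
        split <;> omega
      have h1 := dom_arc (memA (pa := pa) (pb := pb) (pc := pc) (cx := cx) (cy := cy)
        (cz := cz) (Or.inl ⟨⟨_, hsplt⟩, hspr, rfl⟩))
      refine h1.tail (memA (Or.inr (Or.inl ?_)))
      rfl
  | succ t ih =>
      exact (ih (by omega)).tail (memA (Or.inr (Or.inr (Or.inl ⟨t, ht, rfl⟩))))

lemma domA_all (hq : 1 ≤ q) (hpaSurj : ∀ u : X ⊕ Fin (3*q), ∃ t < 6*q, pa t = u)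
    (r : Fin (s13H q)) (v : S13Itm q X) :
    Dominates (Arcs (.inl r)) (s13h q (r : ℕ)) v := by
  rcases v with x | s | i | u
  · obtain ⟨t, ht, hpa⟩ := hpaSurj (Sum.inl x)
    have := domA_pa (pa := pa) (pb := pb) (pc := pc) (cx := cx) (cy := cy) (cz := cz) r ht
    rw [hpa] at this
    exact this
  · simpa using domA_h (pa := pa) (pb := pb) (pc := pc) (cx := cx) (cy := cy) (cz := cz) r s
  · obtain ⟨t, ht, hpa⟩ := hpaSurj (Sum.inr i)
    have := domA_pa (pa := pa) (pb := pb) (pc := pc) (cx := cx) (cy := cy) (cz := cz) r ht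
    rw [hpa] at this
    exact this
  · have h1 := domA_pa (pa := pa) (pb := pb) (pc := pc) (cx := cx) (cy := cy) (cz := cz) r
      (show 6*q - 1 < 6*q by omega)
    exact h1.tail (memA (Or.inr (Or.inr (Or.inr rfl))))

lemma domB_j {i : Fin (3*q)} {t : ℕ} (h1 : (i : ℕ) * (9*q - 1) ≤ t)
    (h2 : t < ((i : ℕ) + 1) * (9*q - 1)) :
    Dominates (Arcs (.inr (.inl ()))) ((s13j q i : S13Itm q X)) (s13h q t) := by
  have ha := dom_arc (memB (pa := pa) (pb := pb) (pc := pc) (cx := cx) (cy := cy) (cz := cz)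
    (Or.inr (Or.inr (Or.inl ⟨i, rfl⟩))))
  refine ha.trans ?_
  refine dom_chain (fun s => s13h q s) h1 ?_
  intro s hs1 hs2
  exact memB (Or.inr (Or.inr (Or.inr (Or.inl ⟨i, s, hs1, by omega, rfl⟩))))

lemma domB_e_h {t : ℕ} (h1 : 3*q * (9*q - 1) ≤ t) (h2 : t ≤ s13H q - 2) :
    Dominates (Arcs (.inr (.inl ()))) ((s13e q : S13Itm q X)) (s13h q t) := by
  have ha := dom_arc (memB (pa := pa) (pb := pb) (pc := pc) (cx := cx) (cy := cy) (cz := cz)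
    (Or.inr (Or.inr (Or.inr (Or.inr (Or.inl rfl))))))
  refine ha.trans ?_
  refine dom_chain (fun s => s13h q s) h1 ?_
  intro s hs1 hs2
  exact memB (Or.inr (Or.inr (Or.inr (Or.inr (Or.inr (Or.inl ⟨s, hs1, by omega, rfl⟩))))))

lemma s13_mul_le : 3*q * (9*q - 1) ≤ s13H q - 2 ∨ q = 0 := by
  rcases Nat.eq_zero_or_pos q with h | h
  · exact Or.inr h
  · left
    have hH : s13H q = 54*q*q + 3*q + 1 := rfl
    have : 3*q * (9*q-1) ≤ 3*q*(9*q) := Nat.mul_le_mul_left _ (by omega)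
    have h9 : 3*q*(9*q) = 27*(q*q) := by ring
    have h54 : 54*q*q = 54*(q*q) := by ring
    omega

lemma domB_e_x (hq : 1 ≤ q) {t : ℕ} (ht : t < 3*q) :
    Dominates (Arcs (.inr (.inl ()))) ((s13e q : S13Itm q X)) (s13x q (pb t)) := by
  have hmul : 3*q * (9*q - 1) ≤ s13H q - 2 := by
    rcases s13_mul_le (q := q) with h | h
    · exact h
    · omega
  have ha := domB_e_h (pa := pa) (pb := pb) (pc := pc) (cx := cx) (cy := cy) (cz := cz)
    hmul le_rfl
  have hb := ha.tail (memB (Or.inr (Or.inr (Or.inr (Or.inr (Or.inr (Or.inr (Or.inl rfl))))))))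
  refine hb.trans ?_
  refine dom_chain (fun s => s13x q (pb s)) (Nat.zero_le t) ?_
  intro s hs1 hs2
  exact memB (Or.inr (Or.inr (Or.inr (Or.inr (Or.inr (Or.inr (Or.inr ⟨s, by omega, rfl⟩)))))))


lemma domC_cx_h (c : Fin (3*q)) {t : ℕ} (ht : t ≤ s13D q - 2) :
    Dominates (Arcs (.inr (.inr c))) ((s13x q (cx c) : S13Itm q X)) (s13h q t) := by
  have ha := dom_arc (memC (pa := pa) (pb := pb) (pc := pc) (cx := cx) (cy := cy) (cz := cz)
    (c := c) (Or.inr (Or.inr (Or.inr (Or.inl rfl)))))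
  refine ha.trans ?_
  refine dom_chain (fun s => s13h q s) (Nat.zero_le t) ?_
  intro s hs1 hs2
  exact memC (Or.inr (Or.inr (Or.inr (Or.inr (Or.inl ⟨s, by omega, rfl⟩)))))

lemma domC_cy_h (c : Fin (3*q)) {t : ℕ} (ht1 : s13D q - 1 ≤ t) (ht2 : t ≤ 2 * s13D q - 3) :
    Dominates (Arcs (.inr (.inr c))) ((s13x q (cy c) : S13Itm q X)) (s13h q t) := by
  have ha := dom_arc (memC (pa := pa) (pb := pb) (pc := pc) (cx := cx) (cy := cy) (cz := cz)
    (c := c) (Or.inr (Or.inr (Or.inr (Or.inr (Or.inr (Or.inl rfl)))))))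
  refine ha.trans ?_
  refine dom_chain (fun s => s13h q s) ht1 ?_
  intro s hs1 hs2
  exact memC (Or.inr (Or.inr (Or.inr (Or.inr (Or.inr (Or.inr (Or.inl ⟨s, hs1, by omega, rfl⟩)))))))

lemma domC_cz_h (c : Fin (3*q)) {t : ℕ} (ht1 : 2 * s13D q - 2 ≤ t) (ht2 : t ≤ s13H q - 1) :
    Dominates (Arcs (.inr (.inr c))) ((s13x q (cz c) : S13Itm q X)) (s13h q t) := by
  have ha := dom_arc (memC (pa := pa) (pb := pb) (pc := pc) (cx := cx) (cy := cy) (cz := cz)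
    (c := c) (Or.inr (Or.inr (Or.inr (Or.inr (Or.inr (Or.inr (Or.inr (Or.inl rfl)))))))))
  have hchain : ∀ t', 2 * s13D q - 2 ≤ t' → t' ≤ s13H q - 2 →
      Dominates (Arcs (.inr (.inr c))) ((s13x q (cz c) : S13Itm q X)) (s13h q t') := by
    intro t' h1 h2
    refine ha.trans ?_
    refine dom_chain (fun s => s13h q s) h1 ?_
    intro s hs1 hs2
    exact memC (Or.inr (Or.inr (Or.inr (Or.inr (Or.inr (Or.inr (Or.inr (Or.inr
      (Or.inl ⟨s, hs1, by omega, rfl⟩)))))))))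
  have hD : s13D q = 18*q*q + q + 1 := rfl
  have hH : s13H q = 54*q*q + 3*q + 1 := rfl
  have h3 : 54*q*q = 3*(18*q*q) := by ring
  rcases Nat.lt_or_ge t (s13H q - 1) with h | h
  · exact hchain t ht1 (by omega)
  · have ht : t = s13H q - 1 := by omega
    subst ht
    refine (hchain (s13H q - 2) (by omega) le_rfl).tail ?_
    exact memC (Or.inr (Or.inr (Or.inr (Or.inr (Or.inr (Or.inr (Or.inr (Or.inr (Or.inr
      (Or.inl rfl))))))))))

lemma domC_cz_pc (hq : 1 ≤ q) (c : Fin (3*q)) {t : ℕ} (ht : t < 6*q - 4) :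
    Dominates (Arcs (.inr (.inr c))) ((s13x q (cz c) : S13Itm q X)) (s13emb q (pc c t)) := by
  have hD : s13D q = 18*q*q + q + 1 := rfl
  have hH : s13H q = 54*q*q + 3*q + 1 := rfl
  have h3 : 54*q*q = 3*(18*q*q) := by ring
  have ha := domC_cz_h (pa := pa) (pb := pb) (pc := pc) (cx := cx) (cy := cy) (cz := cz)
    c (t := s13H q - 1) (by omega) le_rfl
  have hb := ha.tail (memC (Or.inr (Or.inr (Or.inr (Or.inr (Or.inr (Or.inr (Or.inr (Or.inr
    (Or.inr (Or.inr (Or.inl rfl))))))))))))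
  refine hb.trans ?_
  refine dom_chain (fun s => s13emb q (pc c s)) (Nat.zero_le t) ?_
  intro s hs1 hs2
  exact memC (Or.inr (Or.inr (Or.inr (Or.inr (Or.inr (Or.inr (Or.inr (Or.inr (Or.inr
    (Or.inr (Or.inr (Or.inl ⟨s, by omega, rfl⟩))))))))))))

lemma domC_cz_e (hq : 1 ≤ q) (c : Fin (3*q)) :
    Dominates (Arcs (.inr (.inr c))) ((s13x q (cz c) : S13Itm q X)) (s13e q) := by
  have ha := domC_cz_pc (pa := pa) (pb := pb) (pc := pc) (cx := cx) (cy := cy) (cz := cz)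
    hq c (t := 6*q - 5) (by omega)
  exact ha.tail (memC (Or.inr (Or.inr (Or.inr (Or.inr (Or.inr (Or.inr (Or.inr (Or.inr (Or.inr
    (Or.inr (Or.inr (Or.inr rfl)))))))))))))

lemma domC_cover (hq : 1 ≤ q) (c : Fin (3*q))
    (hnotin : ∀ x : X, x ≠ cx c → x ≠ cy c → x ≠ cz c → ∃ t < 6*q - 4, pc c t = Sum.inl x)
    (hji : ∀ i : Fin (3*q), i ≠ c → ∃ t < 6*q - 4, pc c t = Sum.inr i) :
    ∀ v : S13Itm q X, v ≠ s13j q c →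
      Dominates (Arcs (.inr (.inr c))) ((s13x q (cx c) : S13Itm q X)) v ∨
      Dominates (Arcs (.inr (.inr c))) ((s13x q (cy c) : S13Itm q X)) v ∨
      Dominates (Arcs (.inr (.inr c))) ((s13x q (cz c) : S13Itm q X)) v := by
  have hD : s13D q = 18*q*q + q + 1 := rfl
  have hH : s13H q = 54*q*q + 3*q + 1 := rfl
  have h3 : 54*q*q = 3*(18*q*q) := by ring
  intro v hv
  rcases v with x | s | i | u
  · by_cases h1 : x = cx c
    · subst h1; exact Or.inl Relation.ReflTransGen.refl
    by_cases h2 : x = cy c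
    · subst h2; exact Or.inr (Or.inl Relation.ReflTransGen.refl)
    by_cases h3' : x = cz c
    · subst h3'; exact Or.inr (Or.inr Relation.ReflTransGen.refl)
    obtain ⟨t, ht, hpc⟩ := hnotin x h1 h2 h3'
    refine Or.inr (Or.inr ?_)
    have := domC_cz_pc (pa := pa) (pb := pb) (pc := pc) (cx := cx) (cy := cy) (cz := cz)
      hq c ht
    rw [hpc] at this
    exact this
  · have hs : (s : ℕ) < s13H q := s.isLt
    rcases Nat.lt_or_ge (s : ℕ) (s13D q - 1) with h | h
    · refine Or.inl ?_
      have := domC_cx_h (pa := pa) (pb := pb) (pc := pc) (cx := cx) (cy := cy) (cz := cz)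
        c (t := (s : ℕ)) (by omega)
      simpa using this
    rcases Nat.lt_or_ge (s : ℕ) (2 * s13D q - 2) with h' | h'
    · refine Or.inr (Or.inl ?_)
      have := domC_cy_h (pa := pa) (pb := pb) (pc := pc) (cx := cx) (cy := cy) (cz := cz)
        c (t := (s : ℕ)) (by omega) (by omega)
      simpa using this
    · refine Or.inr (Or.inr ?_)
      have := domC_cz_h (pa := pa) (pb := pb) (pc := pc) (cx := cx) (cy := cy) (cz := cz)
        c (t := (s : ℕ)) (by omega) (by omega)
      simpa using this
  · have hic : i ≠ c := fun h => hv (by rw [h]; rfl)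
    obtain ⟨t, ht, hpc⟩ := hji i hic
    refine Or.inr (Or.inr ?_)
    have := domC_cz_pc (pa := pa) (pb := pb) (pc := pc) (cx := cx) (cy := cy) (cz := cz)
      hq c ht
    rw [hpc] at this
    exact this
  · have := domC_cz_e (pa := pa) (pb := pb) (pc := pc) (cx := cx) (cy := cy) (cz := cz) hq c
    exact Or.inr (Or.inr this)

lemma domC_root (hq : 1 ≤ q) (c : Fin (3*q))
    (hnotin : ∀ x : X, x ≠ cx c → x ≠ cy c → x ≠ cz c → ∃ t < 6*q - 4, pc c t = Sum.inl x)
    (hji : ∀ i : Fin (3*q), i ≠ c → ∃ t < 6*q - 4, pc c t = Sum.inr i) :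
    ∀ v : S13Itm q X, Dominates (Arcs (.inr (.inr c))) ((s13j q c : S13Itm q X)) v := by
  intro v
  by_cases hv : v = s13j q c
  · subst hv; exact Relation.ReflTransGen.refl
  rcases domC_cover (pa := pa) (pb := pb) hq c hnotin hji v hv with h | h | h
  · exact (dom_arc (memC (Or.inl rfl))).trans h
  · exact (dom_arc (memC (Or.inr (Or.inl rfl)))).trans h
  · exact (dom_arc (memC (Or.inr (Or.inr (Or.inl rfl))))).trans h

end Dom


open scoped Classical in
noncomputable def s13alloc (q : ℕ) {X : Type*} (S : Set (Fin (3*q)))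
    (cx cy cz : Fin (3*q) → X) : S13Agt q → Set (S13Itm q X)
  | .inl r => {s13h q (r : ℕ)}
  | .inr (.inl _) => {s13e q} ∪ {v | ∃ i ∈ S, v = s13j q i}
  | .inr (.inr c) =>
      if c ∈ S then {s13x q (cx c), s13x q (cy c), s13x q (cz c)} else {s13j q (c : Fin (3*q))}

set_option maxHeartbeats 4000000 in
theorem stmt13 {X : Type*} [Fintype X] [DecidableEq X] (q : ℕ)
    (hX : Fintype.card X = 3*q)
    (C : Fin (3*q) → Finset X) (hC3 : ∀ j, (C j).card = 3)
    (hocc : ∀ x : X, (Finset.univ.filter fun j => x ∈ C j).card = 3)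
    (pa : ℕ → X ⊕ Fin (3*q))
    (hpaInj : Set.InjOn pa (Set.Iio (6*q)))
    (hpaSurj : ∀ u : X ⊕ Fin (3*q), ∃ t < 6*q, pa t = u)
    (pb : ℕ → X)
    (hpbInj : Set.InjOn pb (Set.Iio (3*q)))
    (hpbSurj : ∀ x : X, ∃ t < 3*q, pb t = x)
    (pc : Fin (3*q) → ℕ → X ⊕ Fin (3*q))
    (hpcInj : ∀ j, Set.InjOn (pc j) (Set.Iio (6*q - 4)))
    (hpcRange : ∀ j, ∀ u : X ⊕ Fin (3*q), (∃ t < 6*q - 4, pc j t = u) ↔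
      ((∀ x : X, u = Sum.inl x → x ∉ C j) ∧ ∀ i : Fin (3*q), u = Sum.inr i → i ≠ j))
    (cx cy cz : Fin (3*q) → X)
    (hcxyz : ∀ j, (C j : Set X) = {cx j, cy j, cz j}) :
    (∃ S : Set (Fin (3*q)), ∀ x : X, ∃! j, j ∈ S ∧ x ∈ C j) ↔
    (∃ π : S13Agt q → Set (S13Itm q X), IsAllocation π ∧
      ∑ a : S13Agt q,
        dissat Set.univ (s13Arcs q pa pb pc cx cy cz a) (π a) ≤ s13D q) := by
  classical
  rcases Nat.eq_zero_or_pos q with hq0 | hq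
  · exfalso
    rcases pa 0 with x | i
    · have hE : IsEmpty X := Fintype.card_eq_zero_iff.mp (by rw [hX, hq0])
      exact hE.false x
    · have := i.isLt; omega
  have hq1 : 1 ≤ q := hq
  have hD : s13D q = 18*q*q + q + 1 := rfl
  have hH : s13H q = 54*q*q + 3*q + 1 := rfl
  have h3 : 54*q*q = 3*(18*q*q) := by ring
  have h27 : 3*q*(9*q) = 27*(q*q) := by ring
  have h54' : 54*q*q = 54*(q*q) := by ring
  have h18 : 18*q*q = 18*(q*q) := by ring
  have hxmem : ∀ c : Fin (3*q), ∀ x : X, x ∈ C c ↔ (x = cx c ∨ x = cy c ∨ x = cz c) := by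
    intro c x
    rw [← Finset.mem_coe, hcxyz c]
    simp
  have hnotin : ∀ c : Fin (3*q), ∀ x : X, x ≠ cx c → x ≠ cy c → x ≠ cz c →
      ∃ t < 6*q - 4, pc c t = Sum.inl x := by
    intro c x h1 h2 h3'
    refine (hpcRange c (Sum.inl x)).mpr ⟨?_, ?_⟩
    · rintro x' he
      obtain rfl : x = x' := Sum.inl.inj he
      rw [hxmem c x]
      tauto
    · rintro i he
      exact absurd he (by simp)
  have hji : ∀ c : Fin (3*q), ∀ i : Fin (3*q), i ≠ c → ∃ t < 6*q - 4, pc c t = Sum.inr i := by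
    intro c i hic
    refine (hpcRange c (Sum.inr i)).mpr ⟨?_, ?_⟩
    · rintro x' he
      exact absurd he (by simp)
    · rintro i' he
      obtain rfl : i = i' := Sum.inr.inj he
      exact hic
  constructor
  · rintro ⟨S, hS⟩
    set Sf : Finset (Fin (3*q)) := Finset.univ.filter (fun j => j ∈ S) with hSf
    have hSfmem : ∀ j, j ∈ Sf ↔ j ∈ S := by intro j; simp [hSf]
    have hSdisj : ∀ j ∈ Sf, ∀ j' ∈ Sf, j ≠ j' → Disjoint (C j) (C j') := by
      intro j hj j' hj' hne
      rw [Finset.disjoint_left]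
      intro x hx hx'
      obtain ⟨jj, _, hu⟩ := hS x
      exact hne ((hu j ⟨(hSfmem j).1 hj, hx⟩).trans (hu j' ⟨(hSfmem j').1 hj', hx'⟩).symm)
    have hScover : Sf.biUnion C = Finset.univ := by
      apply Finset.eq_univ_iff_forall.mpr
      intro x
      obtain ⟨j, ⟨hjS, hjx⟩, _⟩ := hS x
      exact Finset.mem_biUnion.mpr ⟨j, (hSfmem j).2 hjS, hjx⟩
    have hScard : Sf.card = q := by
      have h1 : (Sf.biUnion C).card = ∑ j ∈ Sf, (C j).card := Finset.card_biUnion hSdisj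
      rw [hScover] at h1
      have h2 : ∑ j ∈ Sf, (C j).card = 3 * Sf.card := by
        rw [Finset.sum_congr rfl (fun j _ => hC3 j), Finset.sum_const, smul_eq_mul, mul_comm]
      have h3' : (Finset.univ : Finset X).card = 3*q := by simpa using hX
      omega
    have hCallocS : ∀ c : Fin (3*q), c ∈ S → s13alloc q S cx cy cz (.inr (.inr c)) =
        {s13x q (cx c), s13x q (cy c), s13x q (cz c)} := by
      intro c h; simp [s13alloc, h]
    have hCallocN : ∀ c : Fin (3*q), c ∉ S → s13alloc q S cx cy cz (.inr (.inr c)) =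
        {s13j q c} := by
      intro c h; simp [s13alloc, h]
    have hBalloc : s13alloc q S cx cy cz (.inr (.inl ())) =
        {s13e q} ∪ {v | ∃ i ∈ S, v = s13j q i} := by simp [s13alloc]
    have hAalloc : ∀ r : Fin (s13H q), s13alloc q S cx cy cz (.inl r) = {s13h q (r : ℕ)} := by
      intro r; simp [s13alloc]
    refine ⟨s13alloc q S cx cy cz, ?_, ?_⟩
    · -- IsAllocation
      have hmemC : ∀ (c : Fin (3*q)) v, v ∈ s13alloc q S cx cy cz (.inr (.inr c)) →
          (c ∈ S ∧ (v = s13x q (cx c) ∨ v = s13x q (cy c) ∨ v = s13x q (cz c))) ∨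
          (c ∉ S ∧ v = s13j q c) := by
        intro c v hv
        by_cases h : c ∈ S
        · rw [hCallocS c h] at hv
          simp only [Set.mem_insert_iff, Set.mem_singleton_iff] at hv
          exact Or.inl ⟨h, hv⟩
        · rw [hCallocN c h] at hv
          exact Or.inr ⟨h, hv⟩
      have hmemB : ∀ v, v ∈ s13alloc q S cx cy cz (.inr (.inl ())) →
          v = s13e q ∨ ∃ i ∈ S, v = s13j q i := by
        intro v hv
        rw [hBalloc] at hv
        exact hv
      have hAv : ∀ (r : Fin (s13H q)) v, v ∈ s13alloc q S cx cy cz (.inl r) →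
          v = s13h q (r : ℕ) := by
        intro r v hv
        rw [hAalloc r] at hv
        exact hv
      rintro (r | b | c) (r' | b' | c') hne <;> rw [Set.disjoint_left] <;> intro v hv hv'
      · obtain rfl := hAv r v hv
        obtain h := hAv r' _ hv'
        apply hne
        congr 1
        exact Fin.ext (s13h_inj (q := q) (X := X) r.isLt r'.isLt h)
      · obtain rfl := hAv r v hv
        rcases hmemB _ hv' with h | ⟨i, _, h⟩
        · exact s13h_ne_e h
        · exact s13h_ne_j h
      · obtain rfl := hAv r v hv
        rcases hmemC _ _ hv' with ⟨_, h | h | h⟩ | ⟨_, h⟩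
        · exact s13h_ne_x h
        · exact s13h_ne_x h
        · exact s13h_ne_x h
        · exact s13h_ne_j h
      · obtain rfl := hAv r' v hv'
        rcases hmemB _ hv with h | ⟨i, _, h⟩
        · exact s13h_ne_e h
        · exact s13h_ne_j h
      · exact (hne (by cases b; cases b'; rfl)).elim
      · rcases hmemB _ hv with h1 | ⟨i, hiS, h1⟩ <;> subst h1 <;>
          rcases hmemC _ _ hv' with ⟨hc, h | h | h⟩ | ⟨hc, h⟩
        · exact s13e_ne_x h
        · exact s13e_ne_x h
        · exact s13e_ne_x h
        · exact s13e_ne_j h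
        · exact s13j_ne_x h
        · exact s13j_ne_x h
        · exact s13j_ne_x h
        · exact hc (by rw [← s13j_inj.mp h]; exact hiS)
      · obtain rfl := hAv r' v hv'
        rcases hmemC _ _ hv with ⟨_, h | h | h⟩ | ⟨_, h⟩
        · exact s13h_ne_x h
        · exact s13h_ne_x h
        · exact s13h_ne_x h
        · exact s13h_ne_j h
      · rcases hmemB _ hv' with h1 | ⟨i, hiS, h1⟩ <;> subst h1 <;>
          rcases hmemC _ _ hv with ⟨hc, h | h | h⟩ | ⟨hc, h⟩
        · exact s13e_ne_x h
        · exact s13e_ne_x h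
        · exact s13e_ne_x h
        · exact s13e_ne_j h
        · exact s13j_ne_x h
        · exact s13j_ne_x h
        · exact s13j_ne_x h
        · exact hc (by rw [← s13j_inj.mp h]; exact hiS)
      · rcases hmemC _ _ hv with ⟨hc, h1⟩ | ⟨hc, h1⟩ <;>
          rcases hmemC _ _ hv' with ⟨hc', h2⟩ | ⟨hc', h2⟩
        · have hx1 : ∃ x : X, v = s13x q x ∧ x ∈ C c := by
            rcases h1 with h | h | h <;> exact ⟨_, h, (hxmem c _).2 (by tauto)⟩
          have hx2 : ∃ x : X, v = s13x q x ∧ x ∈ C c' := by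
            rcases h2 with h | h | h <;> exact ⟨_, h, (hxmem c' _).2 (by tauto)⟩
          obtain ⟨x1, he1, hm1⟩ := hx1
          obtain ⟨x2, he2, hm2⟩ := hx2
          obtain rfl : x1 = x2 := by rw [he1] at he2; exact s13x_inj.mp he2
          obtain ⟨jj, _, hu⟩ := hS x1
          exact (hne (by rw [(hu c ⟨hc, hm1⟩).trans (hu c' ⟨hc', hm2⟩).symm])).elim
        · subst h2; rcases h1 with h | h | h <;> exact s13j_ne_x h
        · subst h1; rcases h2 with h | h | h <;> exact s13j_ne_x h
        · subst h1
          exact hne (by rw [s13j_inj.mp h2])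
    · -- sum of dissatisfactions
      have hA0 : ∀ r : Fin (s13H q),
          dissat Set.univ (s13Arcs q pa pb pc cx cy cz (.inl r))
            (s13alloc q S cx cy cz (.inl r)) = 0 := by
        intro r
        rw [hAalloc r]
        apply dissat_eq_zero
        intro v
        exact ⟨s13h q (r : ℕ), rfl, domA_all hq1 hpaSurj r v⟩
      have hC0 : ∀ c : Fin (3*q), c ∉ S →
          dissat Set.univ (s13Arcs q pa pb pc cx cy cz (.inr (.inr c)))
            (s13alloc q S cx cy cz (.inr (.inr c))) = 0 := by
        intro c hc
        rw [hCallocN c hc]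
        apply dissat_eq_zero
        intro v
        exact ⟨s13j q c, rfl, domC_root hq1 c (hnotin c) (hji c) v⟩
      have hC1 : ∀ c : Fin (3*q), c ∈ S →
          dissat Set.univ (s13Arcs q pa pb pc cx cy cz (.inr (.inr c)))
            (s13alloc q S cx cy cz (.inr (.inr c))) ≤ 1 := by
        intro c hc
        rw [hCallocS c hc]
        have := dissat_le_card (A := s13Arcs q pa pb pc cx cy cz (.inr (.inr c)))
          (P := {s13x q (cx c), s13x q (cy c), s13x q (cz c)})
          (fun _ : Unit => s13j q c) {()} ?_
        · simpa using this
        intro v hv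
        refine ⟨(), Finset.mem_singleton_self (), ?_⟩
        by_contra hvne
        rcases domC_cover (pa := pa) (pb := pb) hq1 c (hnotin c) (hji c) v
            (fun h => hvne (by rw [h])) with h | h | h
        · exact hv ⟨_, Or.inl rfl, h⟩
        · exact hv ⟨_, Or.inr (Or.inl rfl), h⟩
        · exact hv ⟨_, Or.inr (Or.inr rfl), h⟩
      have hB1 : dissat Set.univ (s13Arcs q pa pb pc cx cy cz (.inr (.inl ())))
          (s13alloc q S cx cy cz (.inr (.inl ()))) ≤ 18*(q*q) + 1 := by
        rw [hBalloc]
        set fB : (Fin (3*q) × Fin (9*q)) ⊕ Unit → S13Itm q X :=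
          fun b => Sum.elim
            (fun p => if (p.2 : ℕ) = 0 then s13j q p.1
              else s13h q ((p.1 : ℕ) * (9*q-1) + (p.2 : ℕ) - 1))
            (fun _ => s13h q (s13H q - 1)) b with hfB
        set TB : Finset ((Fin (3*q) × Fin (9*q)) ⊕ Unit) :=
          ((Sfᶜ ×ˢ (Finset.univ : Finset (Fin (9*q)))).image Sum.inl) ∪ ({Sum.inr ()} : Finset ((Fin (3*q) × Fin (9*q)) ⊕ Unit)) with hTB
        refine le_trans (dissat_le_card fB TB ?_) ?_
        · intro v hv
          rcases v with x | s | i | u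
          · exfalso
            apply hv
            obtain ⟨t, ht, hpb⟩ := hpbSurj x
            refine ⟨s13e q, Or.inl rfl, ?_⟩
            rw [← hpb]
            exact domB_e_x hq1 ht
          · set t := (s : ℕ) with htdef
            have hts : t < s13H q := s.isLt
            by_cases h1 : t = s13H q - 1
            · refine ⟨Sum.inr (), by simp [hTB], ?_⟩
              simp only [hfB, Sum.elim_inr]
              rw [← h1, htdef]
              simp
            rcases Nat.lt_or_ge t (3*q*(9*q-1)) with h2 | h2
            · have h90 : 0 < 9*q - 1 := by omega
              have hdm := Nat.div_add_mod t (9*q-1)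
              have ham : t % (9*q-1) < 9*q-1 := Nat.mod_lt _ h90
              have hcomm : 3*q*(9*q-1) = (9*q-1)*(3*q) := by ring
              have hi0lt : t / (9*q-1) < 3*q := by
                by_contra hge
                have := Nat.mul_le_mul_left (9*q-1) (le_of_not_gt hge)
                omega
              set i0 := t / (9*q-1) with hi0
              set a := t % (9*q-1) with ha
              set iF : Fin (3*q) := ⟨i0, hi0lt⟩ with hiF
              have hval : (iF : ℕ) = i0 := rfl
              have hcomm2 : (i0) * (9*q-1) = (9*q-1) * i0 := by ring
              have hcomm3 : (i0+1) * (9*q-1) = (9*q-1) * i0 + (9*q-1) := by ring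
              by_cases hiS : iF ∈ S
              · exfalso
                apply hv
                refine ⟨s13j q iF, Or.inr ⟨iF, hiS, rfl⟩, ?_⟩
                have hd1 : (iF : ℕ) * (9*q-1) ≤ t := by
                  show i0 * (9*q-1) ≤ t
                  omega
                have hd2 : t < ((iF : ℕ) + 1) * (9*q-1) := by
                  show t < (i0 + 1) * (9*q-1)
                  omega
                have := domB_j (pa := pa) (pb := pb) (pc := pc) (cx := cx) (cy := cy)
                  (cz := cz) (i := iF) (t := t) hd1 hd2
                simpa [htdef] using this
              · refine ⟨Sum.inl (iF, (⟨a+1, by omega⟩ : Fin (9*q))), ?_, ?_⟩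
                · simp only [hTB, Finset.mem_union, Finset.mem_image]
                  exact Or.inl ⟨(iF, ⟨a+1, by omega⟩), by
                    simp [Finset.mem_product, hSfmem, hiS], rfl⟩
                · simp only [hfB, Sum.elim_inl]
                  rw [if_neg (by simp)]
                  have : (iF : ℕ) * (9*q-1) + (a+1) - 1 = t := by
                    rw [hval]; omega
                  rw [this, htdef]
                  simp
            · exfalso
              apply hv
              refine ⟨s13e q, Or.inl rfl, ?_⟩
              have := domB_e_h (pa := pa) (pb := pb) (pc := pc) (cx := cx) (cy := cy)
                (cz := cz) (t := t) h2 (by omega)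
              simpa [htdef] using this
          · by_cases hiS : i ∈ S
            · exfalso
              exact hv ⟨s13j q i, Or.inr ⟨i, hiS, rfl⟩, Relation.ReflTransGen.refl⟩
            · refine ⟨Sum.inl (i, (⟨0, by omega⟩ : Fin (9*q))), ?_, ?_⟩
              · simp only [hTB, Finset.mem_union, Finset.mem_image]
                exact Or.inl ⟨(i, ⟨0, by omega⟩), by
                  simp [Finset.mem_product, hSfmem, hiS], rfl⟩
              · simp only [hfB, Sum.elim_inl]
                rw [if_pos (by simp)]
                rfl
          · exfalso
            apply hv
            cases u
            exact ⟨s13e q, Or.inl rfl, Relation.ReflTransGen.refl⟩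
        · have hcard : TB.card ≤ 2*q*(9*q) + 1 := by
            rw [hTB]
            refine le_trans (Finset.card_union_le _ _) ?_
            have h1 := Finset.card_image_le (s := Sfᶜ ×ˢ (Finset.univ : Finset (Fin (9*q))))
              (f := (Sum.inl : _ → (Fin (3*q) × Fin (9*q)) ⊕ Unit))
            rw [Finset.card_product, Finset.card_compl, hScard] at h1
            simp only [Finset.card_singleton, Finset.card_univ, Fintype.card_fin] at h1 ⊢
            have h2 : (3*q - q) * (9*q) = 2*q*(9*q) := by
              have h4 : 3*q - q = 2*q := by omega
              rw [h4]
            omega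
          have : 2*q*(9*q) = 18*(q*q) := by ring
          omega
      rw [Fintype.sum_sum_type, Fintype.sum_sum_type]
      rw [Finset.sum_eq_zero (fun r _ => hA0 r)]
      have hCs : ∑ c : Fin (3*q), dissat Set.univ (s13Arcs q pa pb pc cx cy cz (.inr (.inr c)))
          (s13alloc q S cx cy cz (.inr (.inr c))) ≤ q := by
        have hle : ∀ c : Fin (3*q),
            dissat Set.univ (s13Arcs q pa pb pc cx cy cz (.inr (.inr c)))
              (s13alloc q S cx cy cz (.inr (.inr c))) ≤ if c ∈ S then 1 else 0 := by
          intro c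
          by_cases hc : c ∈ S
          · rw [if_pos hc]; exact hC1 c hc
          · rw [if_neg hc, hC0 c hc]
        refine le_trans (Finset.sum_le_sum (fun c _ => hle c)) ?_
        have : ∑ c : Fin (3*q), (if c ∈ S then (1:ℕ) else 0) = Sf.card := by
          rw [hSf, Finset.card_filter]
        rw [this, hScard]
      have hBu : ∑ b : Unit, dissat Set.univ (s13Arcs q pa pb pc cx cy cz (.inr (.inl b)))
          (s13alloc q S cx cy cz (.inr (.inl b))) =
          dissat Set.univ (s13Arcs q pa pb pc cx cy cz (.inr (.inl ())))
          (s13alloc q S cx cy cz (.inr (.inl ()))) := by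
        simp
      rw [hBu]
      omega
  · rintro ⟨π, hAlloc, hsum⟩
    have hqq : 1 ≤ q*q := Nat.one_le_iff_ne_zero.mpr (by positivity)
    have h90 : 0 < 9*q - 1 := by omega
    have hm1 : 3*q*(9*q-1) ≤ s13H q - 2 := by
      rcases s13_mul_le (q := q) with h | h
      · exact h
      · omega
    have hiB : ∀ i : Fin (3*q), ((i:ℕ)+1)*(9*q-1) ≤ 3*q*(9*q-1) :=
      fun i => Nat.mul_le_mul_right _ i.isLt
    have hstep : ∀ i : Fin (3*q), (i:ℕ)*(9*q-1) + (9*q-1) = ((i:ℕ)+1)*(9*q-1) :=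
      fun i => by ring
    set dis : S13Agt q → ℕ := fun a =>
      dissat Set.univ (s13Arcs q pa pb pc cx cy cz a) (π a) with hdis
    have h_single : ∀ a, dis a ≤ s13D q := fun a =>
      le_trans (Finset.single_le_sum (f := dis) (fun _ _ => Nat.zero_le _)
        (Finset.mem_univ a)) hsum
    have h_pair : ∀ a b, a ≠ b → dis a + dis b ≤ s13D q := by
      intro a b hab
      have h1 : ∑ x ∈ ({a, b} : Finset (S13Agt q)), dis x ≤ ∑ x : S13Agt q, dis x :=
        Finset.sum_le_sum_of_subset (Finset.subset_univ _)
      rw [Finset.sum_pair hab] at h1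
      exact le_trans h1 hsum
    -- Step 1 : every A agent holds its own h item
    have hWA : ∀ (r s : Fin (s13H q)) (u : S13Itm q X),
        Dominates (s13Arcs q pa pb pc cx cy cz (.inl r)) u (s13h q (s:ℕ)) →
        u = s13h q (r:ℕ) ∨ u = s13h q (s:ℕ) := by
      intro r s u hdom
      have hcl := dom_closed (A := s13Arcs q pa pb pc cx cy cz (.inl r))
        (W := {v | v = s13h q (r:ℕ) ∨ v = s13h q (s:ℕ)}) ?_ hdom (Or.inr rfl)
      · exact hcl
      rintro ⟨u', w'⟩ harc hw
      simp only [Set.mem_setOf_eq] at hw ⊢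
      rcases arcsA_cases r harc with ⟨h1, _⟩ | ⟨h1, h2⟩ | ⟨t, _, h1, h2⟩ | ⟨h1, h2⟩
      · exact Or.inl h1
      · subst h2; rcases hw with hw | hw <;> exact absurd hw s13emb_ne_h
      · subst h2; rcases hw with hw | hw <;> exact absurd hw s13emb_ne_h
      · subst h2; rcases hw with hw | hw <;> exact absurd hw s13e_ne_h
    set Kr : Fin (s13H q) → Finset (Fin (s13H q)) :=
      fun r => Finset.univ.filter (fun s => s13h q (s:ℕ) ∈ π (.inl r)) with hKr
    have hAr_lb : ∀ r : Fin (s13H q), s13h q (r:ℕ) ∉ π (.inl r) →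
        s13H q - 1 - (Kr r).card ≤ dis (.inl r) := by
      intro r hr
      set T : Finset (Fin (s13H q)) :=
        Finset.univ.filter (fun s => s ≠ r ∧ s13h q (s:ℕ) ∉ π (.inl r)) with hT
      have hTcard : s13H q - 1 - (Kr r).card ≤ T.card := by
        have hsub : (Finset.univ : Finset (Fin (s13H q))) ⊆ T ∪ ({r} ∪ Kr r) := by
          intro s _
          by_cases h1 : s = r
          · exact Finset.mem_union_right _ (Finset.mem_union_left _ (by simp [h1]))
          by_cases h2 : s13h q (s:ℕ) ∈ π (.inl r)
          · exact Finset.mem_union_right _ (Finset.mem_union_right _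
              (Finset.mem_filter.mpr ⟨Finset.mem_univ _, h2⟩))
          · exact Finset.mem_union_left _ (Finset.mem_filter.mpr ⟨Finset.mem_univ _, h1, h2⟩)
        have h1 := Finset.card_le_card hsub
        have h2 := Finset.card_union_le T ({r} ∪ Kr r)
        have h3' := Finset.card_union_le ({r} : Finset (Fin (s13H q))) (Kr r)
        simp only [Finset.card_univ, Fintype.card_fin, Finset.card_singleton] at h1 h2 h3'
        omega
      refine le_trans hTcard (card_le_dissat (fun s : Fin (s13H q) => s13h q (s:ℕ)) T ?_ ?_)
      · intro a _ b _ hab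
        exact Fin.ext (s13h_inj a.isLt b.isLt hab)
      · rintro s hs ⟨u, hu, hdom⟩
        obtain ⟨_, hsr, hsnot⟩ := Finset.mem_filter.mp hs
        rcases hWA r s u hdom with rfl | rfl
        · exact hr hu
        · exact hsnot hu
    have hAhold : ∀ r : Fin (s13H q), s13h q (r:ℕ) ∈ π (.inl r) := by
      by_contra hcon
      push_neg at hcon
      obtain ⟨r0, hr0⟩ := hcon
      have h1 := hAr_lb r0 hr0
      have hd0 := h_single (.inl r0)
      have hK0 : 2 ≤ (Kr r0).card := by omega
      have hne : ((Kr r0).erase r0).Nonempty := by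
        rw [← Finset.card_pos]
        have := Finset.pred_card_le_card_erase (s := Kr r0) (a := r0)
        omega
      obtain ⟨s1, hs1⟩ := hne
      have hs1r0 : s1 ≠ r0 := Finset.ne_of_mem_erase hs1
      have hs1K : s13h q (s1:ℕ) ∈ π (.inl r0) :=
        (Finset.mem_filter.mp (Finset.mem_of_mem_erase hs1)).2
      have hs1not : s13h q (s1:ℕ) ∉ π (.inl s1) := by
        intro hmem
        exact (Set.disjoint_left.mp
          (hAlloc (show (.inl s1 : S13Agt q) ≠ .inl r0 by simp [hs1r0])) hmem) hs1K
      have h2 := hAr_lb s1 hs1not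
      have hdisjK : Disjoint (Kr r0) (Kr s1) := by
        rw [Finset.disjoint_left]
        intro s hsa hsb
        exact (Set.disjoint_left.mp
          (hAlloc (show (.inl r0 : S13Agt q) ≠ .inl s1 by simp [hs1r0.symm]))
          (Finset.mem_filter.mp hsa).2) (Finset.mem_filter.mp hsb).2
      have hsumK : (Kr r0).card + (Kr s1).card ≤ s13H q := by
        have hu := Finset.card_union_of_disjoint hdisjK
        have h4 : (Kr r0 ∪ Kr s1).card ≤ Fintype.card (Fin (s13H q)) := by
          rw [← Finset.card_univ]
          exact Finset.card_le_card (Finset.subset_univ _)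
        simp only [Fintype.card_fin] at h4
        omega
      have hp := h_pair (.inl r0) (.inl s1) (by simp [hs1r0.symm])
      omega
    have hhnot : ∀ t : ℕ, t < s13H q → ∀ a : S13Agt q,
        (∀ r : Fin (s13H q), a ≠ Sum.inl r) → s13h q t ∉ π a := by
      intro t ht a hne hmem
      have hr := hAhold ⟨t, ht⟩
      exact (Set.disjoint_left.mp (hAlloc (hne ⟨t, ht⟩)) hmem) hr
    -- Step 2 : lower bound on agent B's dissatisfaction
    have hWB1 : ∀ u : S13Itm q X,
        Dominates (s13Arcs q pa pb pc cx cy cz (.inr (.inl ()))) u (s13h q (s13H q - 1)) →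
        u = s13h q (s13H q - 1) := by
      intro u hdom
      have hcl := dom_closed (A := s13Arcs q pa pb pc cx cy cz (.inr (.inl ())))
        (W := {v | v = s13h q (s13H q - 1)}) ?_ hdom rfl
      · exact hcl
      rintro ⟨u', w'⟩ harc hw
      simp only [Set.mem_setOf_eq] at hw ⊢
      rcases arcsB_cases harc with ⟨h1, i, h2⟩ | ⟨h1, h2⟩ | ⟨i, h1, h2⟩ |
        ⟨i, t, ht1, ht2, h1, h2⟩ | ⟨h1, h2⟩ | ⟨t, ht1, ht2, h1, h2⟩ | ⟨h1, h2⟩ | ⟨t, ht, h1, h2⟩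
      · subst h2; exact absurd hw s13j_ne_h
      · subst h2; exact absurd hw s13e_ne_h
      · subst h2
        have hb := hiB i
        have hst := hstep i
        have := s13h_inj (by omega) (by omega) hw
        omega
      · subst h2
        have hb := hiB i
        have := s13h_inj (by omega) (by omega) hw
        omega
      · subst h2
        have := s13h_inj (by omega) (by omega) hw
        omega
      · subst h2
        have := s13h_inj (by omega) (by omega) hw
        omega
      · subst h2; exact absurd hw s13x_ne_h
      · subst h2; exact absurd hw s13x_ne_h
    have hWB2 : ∀ (i : Fin (3*q)) (u : S13Itm q X),
        Dominates (s13Arcs q pa pb pc cx cy cz (.inr (.inl ()))) u (s13j q i) →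
        u = s13h q (s13H q - 1) ∨ u = s13j q i := by
      intro i u hdom
      have hcl := dom_closed (A := s13Arcs q pa pb pc cx cy cz (.inr (.inl ())))
        (W := {v | v = s13h q (s13H q - 1) ∨ v = s13j q i}) ?_ hdom (Or.inr rfl)
      · exact hcl
      rintro ⟨u', w'⟩ harc hw
      simp only [Set.mem_setOf_eq] at hw ⊢
      rcases arcsB_cases harc with ⟨h1, i', h2⟩ | ⟨h1, h2⟩ | ⟨i', h1, h2⟩ |
        ⟨i', t, ht1, ht2, h1, h2⟩ | ⟨h1, h2⟩ | ⟨t, ht1, ht2, h1, h2⟩ | ⟨h1, h2⟩ | ⟨t, ht, h1, h2⟩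
      · exact Or.inl h1
      · exact Or.inl h1
      · subst h2
        rcases hw with hw | hw
        · have hb := hiB i'
          have hst := hstep i'
          have := s13h_inj (by omega) (by omega) hw
          omega
        · exact absurd hw s13h_ne_j
      · subst h2
        rcases hw with hw | hw
        · have hb := hiB i'
          have := s13h_inj (by omega) (by omega) hw
          omega
        · exact absurd hw s13h_ne_j
      · subst h2
        rcases hw with hw | hw
        · have := s13h_inj (by omega) (by omega) hw
          omega
        · exact absurd hw s13h_ne_j
      · subst h2
        rcases hw with hw | hw
        · have := s13h_inj (by omega) (by omega) hw
          omega
        · exact absurd hw s13h_ne_j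
      · subst h2; rcases hw with hw | hw
        · exact absurd hw s13x_ne_h
        · exact absurd hw s13x_ne_j
      · subst h2; rcases hw with hw | hw
        · exact absurd hw s13x_ne_h
        · exact absurd hw s13x_ne_j
    have hWB3 : ∀ (i : Fin (3*q)) (t : ℕ), (i:ℕ)*(9*q-1) ≤ t → t < ((i:ℕ)+1)*(9*q-1) →
        ∀ u : S13Itm q X,
        Dominates (s13Arcs q pa pb pc cx cy cz (.inr (.inl ()))) u (s13h q t) →
        u = s13h q (s13H q - 1) ∨ u = s13j q i ∨
          ∃ s, (i:ℕ)*(9*q-1) ≤ s ∧ s ≤ t ∧ u = s13h q s := by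
      intro i t hti1 hti2 u hdom
      have hbi := hiB i
      have hsti := hstep i
      have hcl := dom_closed (A := s13Arcs q pa pb pc cx cy cz (.inr (.inl ())))
        (W := {v | v = s13h q (s13H q - 1) ∨ v = s13j q i ∨
          ∃ s, (i:ℕ)*(9*q-1) ≤ s ∧ s ≤ t ∧ v = s13h q s}) ?_ hdom
        (Or.inr (Or.inr ⟨t, hti1, le_rfl, rfl⟩))
      · exact hcl
      rintro ⟨u', w'⟩ harc hw
      simp only [Set.mem_setOf_eq] at hw ⊢
      rcases arcsB_cases harc with ⟨h1, i', h2⟩ | ⟨h1, h2⟩ | ⟨i', h1, h2⟩ |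
        ⟨i', t', ht1, ht2, h1, h2⟩ | ⟨h1, h2⟩ | ⟨t', ht1, ht2, h1, h2⟩ | ⟨h1, h2⟩ |
        ⟨t', ht', h1, h2⟩
      · exact Or.inl h1
      · exact Or.inl h1
      · -- u' = j i', w' = h (i'*(9q-1))
        subst h2
        have hb' := hiB i'
        have hst' := hstep i'
        rcases hw with hw | hw | ⟨s, hs1, hs2, hw⟩
        · have := s13h_inj (by omega) (by omega) hw
          omega
        · exact absurd hw s13h_ne_j
        · have heq := s13h_inj (by omega) (by omega) hw
          -- i'*(9q-1) = s ∈ [i*(9q-1), t] ⊆ [i*(9q-1), (i+1)*(9q-1))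
          have hii : i' = i := by
            have hlt : (i':ℕ)*(9*q-1) < ((i:ℕ)+1)*(9*q-1) := by omega
            have hge : (i:ℕ)*(9*q-1) ≤ (i':ℕ)*(9*q-1) := by omega
            have h5 : (i':ℕ) < (i:ℕ)+1 := Nat.lt_of_mul_lt_mul_right hlt
            have h6 : (i:ℕ) ≤ (i':ℕ) := Nat.le_of_mul_le_mul_right hge h90
            exact Fin.ext (by omega)
          subst hii
          exact Or.inr (Or.inl h1)
      · -- u' = h t', w' = h (t'+1), i'-limb
        subst h2
        have hb' := hiB i'
        have hst' := hstep i'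
        rcases hw with hw | hw | ⟨s, hs1, hs2, hw⟩
        · have := s13h_inj (by omega) (by omega) hw
          omega
        · exact absurd hw s13h_ne_j
        · have heq := s13h_inj (by omega) (by omega) hw
          -- t'+1 = s; show t' ≥ i*(9q-1)
          have ht'ge : (i:ℕ)*(9*q-1) ≤ t' := by
            by_contra hc
            push_neg at hc
            -- t' < i*(9q-1) and t'+1 = s ≥ i*(9q-1) hence t'+1 = i*(9q-1)
            have hii' : (i':ℕ) < (i:ℕ) := by
              by_contra hge'
              push_neg at hge'
              have := Nat.mul_le_mul_right (9*q-1) hge'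
              omega
            have h7 : ((i':ℕ)+1) * (9*q-1) ≤ (i:ℕ)*(9*q-1) :=
              Nat.mul_le_mul_right _ (by omega)
            omega
          exact Or.inr (Or.inr ⟨t', ht'ge, by omega, h1⟩)
      · subst h2
        rcases hw with hw | hw | ⟨s, hs1, hs2, hw⟩
        · have := s13h_inj (by omega) (by omega) hw
          omega
        · exact absurd hw s13h_ne_j
        · have := s13h_inj (by omega) (by omega) hw
          omega
      · subst h2
        rcases hw with hw | hw | ⟨s, hs1, hs2, hw⟩
        · have := s13h_inj (by omega) (by omega) hw
          omega
        · exact absurd hw s13h_ne_j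
        · have := s13h_inj (by omega) (by omega) hw
          omega
      · subst h2
        rcases hw with hw | hw | ⟨s, _, _, hw⟩
        · exact absurd hw s13x_ne_h
        · exact absurd hw s13x_ne_j
        · exact absurd hw s13x_ne_h
      · subst h2
        rcases hw with hw | hw | ⟨s, _, _, hw⟩
        · exact absurd hw s13x_ne_h
        · exact absurd hw s13x_ne_j
        · exact absurd hw s13x_ne_h
    set B : S13Agt q := Sum.inr (Sum.inl ()) with hB
    have hBnotA : ∀ r : Fin (s13H q), B ≠ Sum.inl r := by intro r; simp [hB]
    set J : Finset (Fin (3*q)) :=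
      Finset.univ.filter (fun i => s13j q i ∈ π B) with hJ
    have hBlb : (3*q - J.card) * (9*q) + 1 ≤ dis B := by
      set gB : (Fin (3*q) × Fin (9*q)) ⊕ Unit → S13Itm q X :=
        fun b => Sum.elim
          (fun p => if (p.2 : ℕ) = 0 then s13j q p.1
            else s13h q ((p.1 : ℕ) * (9*q-1) + (p.2 : ℕ) - 1))
          (fun _ => s13h q (s13H q - 1)) b with hgB
      set TJ : Finset ((Fin (3*q) × Fin (9*q)) ⊕ Unit) :=
        ((Jᶜ ×ˢ (Finset.univ : Finset (Fin (9*q)))).image Sum.inl) ∪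
          ({Sum.inr ()} : Finset ((Fin (3*q) × Fin (9*q)) ⊕ Unit)) with hTJ
      have hidx : ∀ (i : Fin (3*q)) (k : Fin (9*q)), (k : ℕ) ≠ 0 →
          (i : ℕ) * (9*q-1) + (k : ℕ) - 1 < 3*q*(9*q-1) := by
        intro i k hp
        have hb := hiB i
        have hst := hstep i
        have h2 := k.isLt
        omega
      have hTJcard : TJ.card = (3*q - J.card) * (9*q) + 1 := by
        rw [hTJ, Finset.card_union_of_disjoint (by simp)]
        rw [Finset.card_image_of_injective _ Sum.inl_injective, Finset.card_product,
          Finset.card_compl, Finset.card_singleton]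
        simp
      rw [← hTJcard]
      refine card_le_dissat gB TJ ?_ ?_
      · -- injectivity
        rintro (⟨i1, k1⟩ | u1) hb1 (⟨i2, k2⟩ | u2) hb2 heq <;>
          simp only [hgB, Sum.elim_inl, Sum.elim_inr] at heq
        · by_cases hk1 : (k1 : ℕ) = 0 <;> by_cases hk2 : (k2 : ℕ) = 0
          · rw [if_pos hk1, if_pos hk2] at heq
            have hi12 := s13j_inj.mp heq
            have hk12 : k1 = k2 := Fin.ext (by omega)
            rw [hi12, hk12]
          · rw [if_pos hk1, if_neg hk2] at heq
            exact absurd heq s13j_ne_h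
          · rw [if_neg hk1, if_pos hk2] at heq
            exact absurd heq s13h_ne_j
          · rw [if_neg hk1, if_neg hk2] at heq
            have hx1 := hidx i1 k1 hk1
            have hx2 := hidx i2 k2 hk2
            have heq2 := s13h_inj (by omega) (by omega) heq
            have h1 := k1.isLt
            have h2 := k2.isLt
            obtain ⟨hii, hkk⟩ := unique_limb (n := 9*q-1) (i := (i1:ℕ)) (i' := (i2:ℕ)) (a := (k1:ℕ)-1) (a' := (k2:ℕ)-1)
              (by omega) (by omega) (by omega)
            have hi12 : i1 = i2 := Fin.ext hii
            have hk12 : k1 = k2 := Fin.ext (by omega)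
            rw [hi12, hk12]
        · by_cases hk1 : (k1 : ℕ) = 0
          · rw [if_pos hk1] at heq
            exact absurd heq s13j_ne_h
          · rw [if_neg hk1] at heq
            have hx1 := hidx i1 k1 hk1
            have := s13h_inj (by omega) (by omega) heq
            omega
        · by_cases hk2 : (k2 : ℕ) = 0
          · rw [if_pos hk2] at heq
            exact absurd heq.symm s13j_ne_h
          · rw [if_neg hk2] at heq
            have hx2 := hidx i2 k2 hk2
            have := s13h_inj (by omega) (by omega) heq
            omega
        · cases u1; cases u2; rfl
      · -- undominated
        rintro (⟨i, k⟩ | u) hbT ⟨u, hu, hdom⟩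
        · have hiJ : i ∉ J := by
            simp only [hTJ, Finset.mem_union, Finset.mem_image, Finset.mem_singleton] at hbT
            rcases hbT with ⟨p, hp, hpe⟩ | h
            · obtain ⟨hp1, _⟩ := Finset.mem_product.mp hp
              obtain ⟨rfl, rfl⟩ := Prod.mk.injEq .. ▸ (Sum.inl.inj hpe)
              exact Finset.mem_compl.mp hp1
            · exact absurd h (by simp)
          have hiJ' : s13j q i ∉ π B := fun hmem =>
            hiJ (Finset.mem_filter.mpr ⟨Finset.mem_univ _, hmem⟩)
          have hH1 : s13h q (s13H q - 1) ∉ π B :=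
            hhnot (s13H q - 1) (by omega) B hBnotA
          by_cases hk : (k : ℕ) = 0
          · simp only [hgB, Sum.elim_inl, if_pos hk] at hdom
            rcases hWB2 i u hdom with rfl | rfl
            · exact hH1 hu
            · exact hiJ' hu
          · simp only [hgB, Sum.elim_inl, if_neg hk] at hdom
            have hb := hiB i
            have hst := hstep i
            have hkl := k.isLt
            rcases hWB3 i ((i:ℕ)*(9*q-1) + (k:ℕ) - 1) (by omega) (by omega) u hdom with
              rfl | rfl | ⟨s, hs1, hs2, rfl⟩
            · exact hH1 hu
            · exact hiJ' hu
            · exact hhnot s (by omega) B hBnotA hu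
        · simp only [hgB, Sum.elim_inr] at hdom
          obtain rfl := hWB1 u hdom
          exact hhnot (s13H q - 1) (by omega) B hBnotA hu
    -- Step 3 : every C agent holds its root or its whole triple
    have hpcC : ∀ (c : Fin (3*q)) (t : ℕ), t < 6*q - 4 →
        (∀ x : X, pc c t = Sum.inl x → x ∉ C c) ∧
        (∀ i : Fin (3*q), pc c t = Sum.inr i → i ≠ c) :=
      fun c t ht => (hpcRange c (pc c t)).mp ⟨t, ht, rfl⟩
    have hCc_lb : ∀ c : Fin (3*q), s13j q c ∉ π (.inr (.inr c)) →
        ((s13x q (cx c) ∉ π (.inr (.inr c))) ∨ (s13x q (cy c) ∉ π (.inr (.inr c))) ∨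
          (s13x q (cz c) ∉ π (.inr (.inr c)))) →
        s13D q ≤ dis (.inr (.inr c)) := by
      intro c hj hmiss
      have hnot_h : ∀ s : ℕ, s < s13H q → s13h q s ∉ π (.inr (.inr c)) :=
        fun s hs => hhnot s hs _ (fun r => by simp)
      have hembW : ∀ (t : ℕ), t < 6*q - 4 → ∀ z : X,
          (s13emb q (pc c t) : S13Itm q X) ≠ s13j q c ∧
          ((z = cx c ∨ z = cy c ∨ z = cz c) → (s13emb q (pc c t) : S13Itm q X) ≠ s13x q z) := by
        intro t ht z
        constructor
        · intro he
          exact ((hpcC c t ht).2 c (s13emb_eq_j.mp he)) rfl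
        · intro hz he
          exact (hpcC c t ht).1 z (s13emb_eq_x.mp he) ((hxmem c z).2 hz)
      rcases hmiss with hmiss | hmiss | hmiss
      · -- cx missing
        have hcl : ∀ u v : S13Itm q X,
            Dominates (s13Arcs q pa pb pc cx cy cz (.inr (.inr c))) u v →
            (v = s13j q c ∨ v = s13x q (cx c) ∨ ∃ s, s ≤ s13D q - 2 ∧ v = s13h q s) →
            (u = s13j q c ∨ u = s13x q (cx c) ∨ ∃ s, s ≤ s13D q - 2 ∧ u = s13h q s) := by
          intro u v hdom hv
          refine dom_closed (W := {v | v = s13j q c ∨ v = s13x q (cx c) ∨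
            ∃ s, s ≤ s13D q - 2 ∧ v = s13h q s}) ?_ hdom hv
          rintro ⟨u', w'⟩ harc hw
          simp only [Set.mem_setOf_eq] at hw ⊢
          rcases arcsC_cases hq1 c harc with ⟨h1, _⟩ | ⟨h1, h2⟩ | ⟨h1, h2⟩ | ⟨h1, h2⟩ |
            ⟨s, hs1, hsr, h1, h2⟩ | ⟨h1, h2⟩ | ⟨t, ht, h1, h2⟩ | ⟨h1, h2⟩
          · exact Or.inl h1
          · exact Or.inr (Or.inl h1)
          · subst h2
            rcases hw with hw | hw | ⟨s, hs, hw⟩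
            · exact absurd hw s13h_ne_j
            · exact absurd hw s13h_ne_x
            · have := s13h_inj (by omega) (by omega) hw
              omega
          · subst h2
            rcases hw with hw | hw | ⟨s, hs, hw⟩
            · exact absurd hw s13h_ne_j
            · exact absurd hw s13h_ne_x
            · have := s13h_inj (by omega) (by omega) hw
              omega
          · subst h2
            rcases hw with hw | hw | ⟨s', hs', hw⟩
            · exact absurd hw s13h_ne_j
            · exact absurd hw s13h_ne_x
            · have := s13h_inj (by omega) (by omega) hw
              exact Or.inr (Or.inr ⟨s - 1, by omega, h1⟩)
          · subst h2
            rcases hw with hw | hw | ⟨s, hs, hw⟩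
            · exact absurd hw (hembW 0 (by omega) (cx c)).1
            · exact absurd hw ((hembW 0 (by omega) (cx c)).2 (Or.inl rfl))
            · exact absurd hw s13emb_ne_h
          · subst h2
            rcases hw with hw | hw | ⟨s, hs, hw⟩
            · exact absurd hw (hembW (t+1) (by omega) (cx c)).1
            · exact absurd hw ((hembW (t+1) (by omega) (cx c)).2 (Or.inl rfl))
            · exact absurd hw s13emb_ne_h
          · subst h2
            rcases hw with hw | hw | ⟨s, hs, hw⟩
            · exact absurd hw s13e_ne_j
            · exact absurd hw s13e_ne_x
            · exact absurd hw s13e_ne_h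
        have hcard := card_le_dissat
          (A := s13Arcs q pa pb pc cx cy cz (.inr (.inr c))) (P := π (.inr (.inr c)))
          (fun k : ℕ => if k = 0 then s13x q (cx c) else s13h q (k-1))
          (Finset.range (s13D q)) ?_ ?_
        · rwa [Finset.card_range] at hcard
        · intro a ha b hb hab
          simp only [Finset.coe_range, Set.mem_Iio] at ha hb
          beta_reduce at hab
          by_cases ha0 : a = 0 <;> by_cases hb0 : b = 0
          · omega
          · rw [if_pos ha0, if_neg hb0] at hab
            exact absurd hab s13x_ne_h
          · rw [if_neg ha0, if_pos hb0] at hab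
            exact absurd hab s13h_ne_x
          · rw [if_neg ha0, if_neg hb0] at hab
            have := s13h_inj (by omega) (by omega) hab
            omega
        · rintro k hk ⟨u, hu, hdom⟩
          rw [Finset.mem_range] at hk
          have hvW : (if k = 0 then s13x q (cx c) else s13h q (k-1)) = s13j q c ∨
              (if k = 0 then s13x q (cx c) else s13h q (k-1)) = s13x q (cx c) ∨
              ∃ s, s ≤ s13D q - 2 ∧
                (if k = 0 then s13x q (cx c) else s13h q (k-1)) = s13h q s := by
            by_cases hk0 : k = 0
            · rw [if_pos hk0]
              exact Or.inr (Or.inl rfl)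
            · rw [if_neg hk0]
              exact Or.inr (Or.inr ⟨k-1, by omega, rfl⟩)
          rcases hcl u _ hdom hvW with rfl | rfl | ⟨s, hs, rfl⟩
          · exact hj hu
          · exact hmiss hu
          · exact hnot_h s (by omega) hu
      · -- cy missing
        have hcl : ∀ u v : S13Itm q X,
            Dominates (s13Arcs q pa pb pc cx cy cz (.inr (.inr c))) u v →
            (v = s13j q c ∨ v = s13x q (cy c) ∨
              ∃ s, s13D q - 1 ≤ s ∧ s ≤ 2 * s13D q - 3 ∧ v = s13h q s) →
            (u = s13j q c ∨ u = s13x q (cy c) ∨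
              ∃ s, s13D q - 1 ≤ s ∧ s ≤ 2 * s13D q - 3 ∧ u = s13h q s) := by
          intro u v hdom hv
          refine dom_closed (W := {v | v = s13j q c ∨ v = s13x q (cy c) ∨
            ∃ s, s13D q - 1 ≤ s ∧ s ≤ 2 * s13D q - 3 ∧ v = s13h q s}) ?_ hdom hv
          rintro ⟨u', w'⟩ harc hw
          simp only [Set.mem_setOf_eq] at hw ⊢
          rcases arcsC_cases hq1 c harc with ⟨h1, _⟩ | ⟨h1, h2⟩ | ⟨h1, h2⟩ | ⟨h1, h2⟩ |
            ⟨s, hs1, hsr, h1, h2⟩ | ⟨h1, h2⟩ | ⟨t, ht, h1, h2⟩ | ⟨h1, h2⟩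
          · exact Or.inl h1
          · subst h2
            rcases hw with hw | hw | ⟨s, hs, hs', hw⟩
            · exact absurd hw s13h_ne_j
            · exact absurd hw s13h_ne_x
            · have := s13h_inj (by omega) (by omega) hw
              omega
          · exact Or.inr (Or.inl h1)
          · subst h2
            rcases hw with hw | hw | ⟨s, hs, hs', hw⟩
            · exact absurd hw s13h_ne_j
            · exact absurd hw s13h_ne_x
            · have := s13h_inj (by omega) (by omega) hw
              omega
          · subst h2
            rcases hw with hw | hw | ⟨s', hs', hs'', hw⟩
            · exact absurd hw s13h_ne_j
            · exact absurd hw s13h_ne_x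
            · have := s13h_inj (by omega) (by omega) hw
              refine Or.inr (Or.inr ⟨s - 1, by omega, by omega, h1⟩)
          · subst h2
            rcases hw with hw | hw | ⟨s, hs, hs', hw⟩
            · exact absurd hw (hembW 0 (by omega) (cy c)).1
            · exact absurd hw ((hembW 0 (by omega) (cy c)).2 (Or.inr (Or.inl rfl)))
            · exact absurd hw s13emb_ne_h
          · subst h2
            rcases hw with hw | hw | ⟨s, hs, hs', hw⟩
            · exact absurd hw (hembW (t+1) (by omega) (cy c)).1
            · exact absurd hw ((hembW (t+1) (by omega) (cy c)).2 (Or.inr (Or.inl rfl)))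
            · exact absurd hw s13emb_ne_h
          · subst h2
            rcases hw with hw | hw | ⟨s, hs, hs', hw⟩
            · exact absurd hw s13e_ne_j
            · exact absurd hw s13e_ne_x
            · exact absurd hw s13e_ne_h
        have hcard := card_le_dissat
          (A := s13Arcs q pa pb pc cx cy cz (.inr (.inr c))) (P := π (.inr (.inr c)))
          (fun k : ℕ => if k = 0 then s13x q (cy c) else s13h q (s13D q - 2 + k))
          (Finset.range (s13D q)) ?_ ?_
        · rwa [Finset.card_range] at hcard
        · intro a ha b hb hab
          simp only [Finset.coe_range, Set.mem_Iio] at ha hb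
          beta_reduce at hab
          by_cases ha0 : a = 0 <;> by_cases hb0 : b = 0
          · omega
          · rw [if_pos ha0, if_neg hb0] at hab
            exact absurd hab s13x_ne_h
          · rw [if_neg ha0, if_pos hb0] at hab
            exact absurd hab s13h_ne_x
          · rw [if_neg ha0, if_neg hb0] at hab
            have := s13h_inj (by omega) (by omega) hab
            omega
        · rintro k hk ⟨u, hu, hdom⟩
          rw [Finset.mem_range] at hk
          have hvW : (if k = 0 then s13x q (cy c) else s13h q (s13D q - 2 + k)) = s13j q c ∨
              (if k = 0 then s13x q (cy c) else s13h q (s13D q - 2 + k)) = s13x q (cy c) ∨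
              ∃ s, s13D q - 1 ≤ s ∧ s ≤ 2 * s13D q - 3 ∧
                (if k = 0 then s13x q (cy c) else s13h q (s13D q - 2 + k)) = s13h q s := by
            by_cases hk0 : k = 0
            · rw [if_pos hk0]
              exact Or.inr (Or.inl rfl)
            · rw [if_neg hk0]
              exact Or.inr (Or.inr ⟨s13D q - 2 + k, by omega, by omega, rfl⟩)
          rcases hcl u _ hdom hvW with rfl | rfl | ⟨s, hs, hs', rfl⟩
          · exact hj hu
          · exact hmiss hu
          · exact hnot_h s (by omega) hu
      · -- cz missing
        have hcl : ∀ u v : S13Itm q X,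
            Dominates (s13Arcs q pa pb pc cx cy cz (.inr (.inr c))) u v →
            (v = s13j q c ∨ v = s13x q (cz c) ∨
              ∃ s, 2 * s13D q - 2 ≤ s ∧ s ≤ s13H q - 1 ∧ v = s13h q s) →
            (u = s13j q c ∨ u = s13x q (cz c) ∨
              ∃ s, 2 * s13D q - 2 ≤ s ∧ s ≤ s13H q - 1 ∧ u = s13h q s) := by
          intro u v hdom hv
          refine dom_closed (W := {v | v = s13j q c ∨ v = s13x q (cz c) ∨
            ∃ s, 2 * s13D q - 2 ≤ s ∧ s ≤ s13H q - 1 ∧ v = s13h q s}) ?_ hdom hv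
          rintro ⟨u', w'⟩ harc hw
          simp only [Set.mem_setOf_eq] at hw ⊢
          rcases arcsC_cases hq1 c harc with ⟨h1, _⟩ | ⟨h1, h2⟩ | ⟨h1, h2⟩ | ⟨h1, h2⟩ |
            ⟨s, hs1, hsr, h1, h2⟩ | ⟨h1, h2⟩ | ⟨t, ht, h1, h2⟩ | ⟨h1, h2⟩
          · exact Or.inl h1
          · subst h2
            rcases hw with hw | hw | ⟨s, hs, hs', hw⟩
            · exact absurd hw s13h_ne_j
            · exact absurd hw s13h_ne_x
            · have := s13h_inj (by omega) (by omega) hw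
              omega
          · subst h2
            rcases hw with hw | hw | ⟨s, hs, hs', hw⟩
            · exact absurd hw s13h_ne_j
            · exact absurd hw s13h_ne_x
            · have := s13h_inj (by omega) (by omega) hw
              omega
          · exact Or.inr (Or.inl h1)
          · subst h2
            rcases hw with hw | hw | ⟨s', hs', hs'', hw⟩
            · exact absurd hw s13h_ne_j
            · exact absurd hw s13h_ne_x
            · have := s13h_inj (by omega) (by omega) hw
              refine Or.inr (Or.inr ⟨s - 1, by omega, by omega, h1⟩)
          · subst h2
            rcases hw with hw | hw | ⟨s, hs, hs', hw⟩
            · exact absurd hw (hembW 0 (by omega) (cz c)).1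
            · exact absurd hw ((hembW 0 (by omega) (cz c)).2 (Or.inr (Or.inr rfl)))
            · exact absurd hw s13emb_ne_h
          · subst h2
            rcases hw with hw | hw | ⟨s, hs, hs', hw⟩
            · exact absurd hw (hembW (t+1) (by omega) (cz c)).1
            · exact absurd hw ((hembW (t+1) (by omega) (cz c)).2 (Or.inr (Or.inr rfl)))
            · exact absurd hw s13emb_ne_h
          · subst h2
            rcases hw with hw | hw | ⟨s, hs, hs', hw⟩
            · exact absurd hw s13e_ne_j
            · exact absurd hw s13e_ne_x
            · exact absurd hw s13e_ne_h
        have hcard := card_le_dissat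
          (A := s13Arcs q pa pb pc cx cy cz (.inr (.inr c))) (P := π (.inr (.inr c)))
          (fun k : ℕ => if k = 0 then s13x q (cz c) else s13h q (2 * s13D q - 3 + k))
          (Finset.range (s13D q)) ?_ ?_
        · rwa [Finset.card_range] at hcard
        · intro a ha b hb hab
          simp only [Finset.coe_range, Set.mem_Iio] at ha hb
          beta_reduce at hab
          by_cases ha0 : a = 0 <;> by_cases hb0 : b = 0
          · omega
          · rw [if_pos ha0, if_neg hb0] at hab
            exact absurd hab s13x_ne_h
          · rw [if_neg ha0, if_pos hb0] at hab
            exact absurd hab s13h_ne_x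
          · rw [if_neg ha0, if_neg hb0] at hab
            have := s13h_inj (by omega) (by omega) hab
            omega
        · rintro k hk ⟨u, hu, hdom⟩
          rw [Finset.mem_range] at hk
          have hvW : (if k = 0 then s13x q (cz c) else s13h q (2 * s13D q - 3 + k)) =
                s13j q c ∨
              (if k = 0 then s13x q (cz c) else s13h q (2 * s13D q - 3 + k)) =
                s13x q (cz c) ∨
              ∃ s, 2 * s13D q - 2 ≤ s ∧ s ≤ s13H q - 1 ∧
                (if k = 0 then s13x q (cz c) else s13h q (2 * s13D q - 3 + k)) = s13h q s := by
            by_cases hk0 : k = 0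
            · rw [if_pos hk0]
              exact Or.inr (Or.inl rfl)
            · rw [if_neg hk0]
              exact Or.inr (Or.inr ⟨2 * s13D q - 3 + k, by omega, by omega, rfl⟩)
          rcases hcl u _ hdom hvW with rfl | rfl | ⟨s, hs, hs', rfl⟩
          · exact hj hu
          · exact hmiss hu
          · exact hnot_h s (by omega) hu
    have hBpos : 1 ≤ dis B := le_trans (by omega) hBlb
    have hCchoice : ∀ c : Fin (3*q), s13j q c ∈ π (.inr (.inr c)) ∨
        (s13x q (cx c) ∈ π (.inr (.inr c)) ∧ s13x q (cy c) ∈ π (.inr (.inr c)) ∧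
          s13x q (cz c) ∈ π (.inr (.inr c))) := by
      intro c
      by_cases hj : s13j q c ∈ π (.inr (.inr c))
      · exact Or.inl hj
      by_cases h1 : s13x q (cx c) ∈ π (.inr (.inr c))
      · by_cases h2 : s13x q (cy c) ∈ π (.inr (.inr c))
        · by_cases h3' : s13x q (cz c) ∈ π (.inr (.inr c))
          · exact Or.inr ⟨h1, h2, h3'⟩
          · exfalso
            have := hCc_lb c hj (Or.inr (Or.inr h3'))
            have := h_pair B (.inr (.inr c)) (by simp [hB])
            omega
        · exfalso
          have := hCc_lb c hj (Or.inr (Or.inl h2))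
          have := h_pair B (.inr (.inr c)) (by simp [hB])
          omega
      · exfalso
        have := hCc_lb c hj (Or.inl h1)
        have := h_pair B (.inr (.inr c)) (by simp [hB])
        omega
    -- Step 4 : extract the exact cover
    set Sc : Finset (Fin (3*q)) :=
      Finset.univ.filter (fun c => s13j q c ∉ π (.inr (.inr c))) with hSc
    have hTriple : ∀ c ∈ Sc, s13x q (cx c) ∈ π (.inr (.inr c)) ∧
        s13x q (cy c) ∈ π (.inr (.inr c)) ∧ s13x q (cz c) ∈ π (.inr (.inr c)) := by
      intro c hc
      have := (Finset.mem_filter.mp hc).2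
      rcases hCchoice c with h | h
      · exact absurd h this
      · exact h
    have hJSc : J ⊆ Sc := by
      intro i hi
      have hmem : s13j q i ∈ π B := (Finset.mem_filter.mp hi).2
      refine Finset.mem_filter.mpr ⟨Finset.mem_univ _, fun hmem' => ?_⟩
      exact (Set.disjoint_left.mp (hAlloc (show B ≠ .inr (.inr i) by simp [hB])) hmem) hmem'
    have hJcard : q ≤ J.card := by
      have h1 := h_single B
      by_contra hlt
      push_neg at hlt
      have h2 : 2*q+1 ≤ 3*q - J.card := by omega
      have h3' := Nat.mul_le_mul_right (9*q) h2
      have h4 : (2*q+1)*(9*q) = 18*(q*q) + 9*q := by ring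
      omega
    have hSccard : q ≤ Sc.card := le_trans hJcard (Finset.card_le_card hJSc)
    have hScdisj : ∀ c ∈ Sc, ∀ c' ∈ Sc, c ≠ c' → Disjoint (C c) (C c') := by
      intro c hc c' hc' hne
      rw [Finset.disjoint_left]
      intro x hx hx'
      have hxin : s13x q x ∈ π (.inr (.inr c)) := by
        rcases (hxmem c x).1 hx with h | h | h <;> rw [h]
        · exact (hTriple c hc).1
        · exact (hTriple c hc).2.1
        · exact (hTriple c hc).2.2
      have hxin' : s13x q x ∈ π (.inr (.inr c')) := by
        rcases (hxmem c' x).1 hx' with h | h | h <;> rw [h]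
        · exact (hTriple c' hc').1
        · exact (hTriple c' hc').2.1
        · exact (hTriple c' hc').2.2
      exact (Set.disjoint_left.mp
        (hAlloc (show (.inr (.inr c) : S13Agt q) ≠ .inr (.inr c') by simp [hne])) hxin) hxin'
    have hcover : ∀ x : X, ∃ c ∈ Sc, x ∈ C c := by
      have hbU : (Sc.biUnion C).card = 3 * Sc.card := by
        rw [Finset.card_biUnion hScdisj]
        rw [Finset.sum_congr rfl (fun j _ => hC3 j), Finset.sum_const, smul_eq_mul, mul_comm]
      have huniv : Sc.biUnion C = Finset.univ := by
        apply Finset.eq_univ_of_card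
        have h1 : (Sc.biUnion C).card ≤ Fintype.card X := by
          rw [← Finset.card_univ]
          exact Finset.card_le_card (Finset.subset_univ _)
        omega
      intro x
      have : x ∈ Sc.biUnion C := by rw [huniv]; exact Finset.mem_univ x
      exact Finset.mem_biUnion.mp this
    refine ⟨↑Sc, ?_⟩
    intro x
    obtain ⟨c, hc, hcx⟩ := hcover x
    refine ⟨c, ⟨Finset.mem_coe.mpr hc, hcx⟩, ?_⟩
    rintro c' ⟨hc', hcx'⟩
    by_contra hne
    exact (Finset.disjoint_left.mp (hScdisj c' (Finset.mem_coe.mp hc') c hc hne) hcx') hcx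
end

section
/- Let φ be a 3-SAT formula with variables x_1, …, x_n and m clauses each containing exactly 3 literals. Consider the two-agent allocation instance with K = {1, 2}, items V = {v_i, v̄_i, u_i : 1 ≤ i ≤ n} ∪ {c_j : 1 ≤ j ≤ m}, V_1 = V_2 = V, A_1 = {(v_i, c_j) : literal x_i appears in clause j} ∪ {(v̄_i, c_j) : literal ¬x_i appears in clause j}, and A_2 = {(v_i, u_i), (v̄_i, u_i) : 1 ≤ i ≤ n}. Then every allocation π satisfies δ_π(1) + δ_π(2) ≥ 2n and max(δ_π(1), δ_π(2)) ≥ n. -/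
/-- Items of the reduction: variable items `v_i = (i, true)`, `v̄_i = (i, false)`,
dummy items `u_i`, and clause items `c_j`. -/
abbrev SatItm (n m : ℕ) : Type := (Fin n × Bool) ⊕ Fin n ⊕ Fin m

/-- Arcs of agent 1: from each literal item to the items of the clauses containing it.
Clause `j` is given by its three literals `cl j 0, cl j 1, cl j 2`, a literal being a pair
(variable index, sign). -/
def satA1 (n m : ℕ) (cl : Fin m → Fin 3 → Fin n × Bool) :
    Set (SatItm n m × SatItm n m) :=
  {p | ∃ (j : Fin m) (t : Fin 3), p = (.inl (cl j t), .inr (.inr j))}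

/-- Arcs of agent 2: `(v_i, u_i)` and `(v̄_i, u_i)` for each variable `i`. -/
def satA2 (n m : ℕ) : Set (SatItm n m × SatItm n m) :=
  {p | ∃ (i : Fin n) (b : Bool), p = (.inl (i, b), .inr (.inl i))}

lemma dom1_inl {n m : ℕ} {cl : Fin m → Fin 3 → Fin n × Bool} {u : SatItm n m}
    {x : Fin n × Bool} (h : Dominates (satA1 n m cl) u (.inl x)) : u = .inl x := by
  rcases h.cases_tail with h | ⟨c, _, hc⟩
  · exact h.symm
  · obtain ⟨j, t, hj⟩ := hc
    simp [Prod.ext_iff] at hj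

lemma dom2_inl {n m : ℕ} {u : SatItm n m}
    {x : Fin n × Bool} (h : Dominates (satA2 n m) u (.inl x)) : u = .inl x := by
  rcases h.cases_tail with h | ⟨c, _, hc⟩
  · exact h.symm
  · obtain ⟨i, b, hi⟩ := hc
    simp [Prod.ext_iff] at hi

theorem stmt14 (n m : ℕ) (cl : Fin m → Fin 3 → Fin n × Bool)
    (P1 P2 : Set (SatItm n m)) (hdisj : Disjoint P1 P2) :
    2*n ≤ dissat Set.univ (satA1 n m cl) P1 + dissat Set.univ (satA2 n m) P2 ∧
    n ≤ max (dissat Set.univ (satA1 n m cl) P1) (dissat Set.univ (satA2 n m) P2) := by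
  set D1 : Set (SatItm n m) :=
    {v | v ∈ Set.univ ∧ ¬ ∃ u, u ∈ P1 ∧ u ∈ Set.univ ∧ Dominates (satA1 n m cl) u v} with hD1
  set D2 : Set (SatItm n m) :=
    {v | v ∈ Set.univ ∧ ¬ ∃ u, u ∈ P2 ∧ u ∈ Set.univ ∧ Dominates (satA2 n m) u v} with hD2
  have hsub : Set.range (Sum.inl : Fin n × Bool → SatItm n m) ⊆ D1 ∪ D2 := by
    rintro _ ⟨x, rfl⟩
    by_cases h1 : (Sum.inl x : SatItm n m) ∈ P1
    · right
      refine ⟨trivial, ?_⟩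
      rintro ⟨u, hu, -, hdom⟩
      rw [dom2_inl hdom] at hu
      exact hdisj.le_bot ⟨h1, hu⟩ |>.elim
    · left
      refine ⟨trivial, ?_⟩
      rintro ⟨u, hu, -, hdom⟩
      rw [dom1_inl hdom] at hu
      exact h1 hu
  have hcard : 2*n ≤ D1.ncard + D2.ncard := by
    calc 2*n = (Set.range (Sum.inl : Fin n × Bool → SatItm n m)).ncard := by
          rw [Set.ncard_eq_toFinset_card']
          simp [Set.toFinset_range, Finset.card_image_of_injective _ Sum.inl_injective,
            mul_comm]
      _ ≤ (D1 ∪ D2).ncard := Set.ncard_le_ncard hsub (Set.toFinite _)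
      _ ≤ D1.ncard + D2.ncard := Set.ncard_union_le _ _
  have h1 : dissat Set.univ (satA1 n m cl) P1 = D1.ncard := rfl
  have h2 : dissat Set.univ (satA2 n m) P2 = D2.ncard := rfl
  rw [h1, h2]
  omega
end

section
/- Let (X, C) be an instance of 3X3C with |X| = 3q, C = {C_1, …, C_p}, p = 3q and p ≥ 6, and let ℓ = 4p/3 (an even integer). Consider the allocation instance with items V = X ∪ {h_1, …, h_{ℓ+1}} ∪ {j, b_j^0, b_j^1, e_j : 1 ≤ j ≤ p} ∪ {a_1, …, a_{ℓ+1}} and agents D_1, …, D_{ℓ+1}, F, B_1, …, B_p, C_1, …, C_p whose preference graphs are the following directed matchings: agent D_r (1 ≤ r ≤ ℓ+1) has arcs (h_1, h_2), (h_3, h_4), …, (h_{ℓ−1}, h_ℓ), (h_{ℓ+1}, a_r); agent F has arcs (j, h_j) for 1 ≤ j ≤ p; agent B_j has arcs (j, b_j^0), (h_1, b_j^1), (h_2, h_3), (h_4, h_5), …, (h_{ℓ−2}, h_{ℓ−1}); and agent C_j, with C_j = {x, y, z}, has arcs (b_j^0, x), (b_j^1, y), (h_1, z), (h_2, h_3),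 (h_4, h_5), …, (h_{ℓ−4}, h_{ℓ−3}), (h_{ℓ−2}, e_j). Then C contains an exact cover of X if and only if there exists an allocation π with δ_π(i) ≤ ℓ for every agent i. -/
/-- Items of the reduction: the elements of `X`, the items `h_1, …, h_{ℓ+1}`
(indexed by `Fin (4q+1)`, with `h_t` at index `t-1`), the items `1, …, p`,
the items `b_j^0, b_j^1`, the items `e_j`, and the items `a_1, …, a_{ℓ+1}`,
where `p = 3q` and `ℓ = 4p/3 = 4q`. -/
abbrev S16Itm (q : ℕ) (X : Type*) : Type _ :=
  X ⊕ Fin (4*q+1) ⊕ Fin (3*q) ⊕ (Fin (3*q) × Bool) ⊕ Fin (3*q) ⊕ Fin (4*q+1)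

/-- Agents of the reduction: `D_1, …, D_{ℓ+1}`, agent `F`, agents `B_j`, agents `C_j`. -/
abbrev S16Agt (q : ℕ) : Type := Fin (4*q+1) ⊕ Unit ⊕ Fin (3*q) ⊕ Fin (3*q)

instance (q : ℕ) : NeZero (4*q+1) := ⟨by omega⟩

def s16x (q : ℕ) {X : Type*} (v : X) : S16Itm q X := Sum.inl v
def s16h (q : ℕ) {X : Type*} (t : ℕ) : S16Itm q X := Sum.inr (Sum.inl (Fin.ofNat (4*q+1) t))
def s16j (q : ℕ) {X : Type*} (i : Fin (3*q)) : S16Itm q X := Sum.inr (Sum.inr (Sum.inl i))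
def s16b (q : ℕ) {X : Type*} (i : Fin (3*q)) (s : Bool) : S16Itm q X :=
  Sum.inr (Sum.inr (Sum.inr (Sum.inl (i, s))))
def s16e (q : ℕ) {X : Type*} (i : Fin (3*q)) : S16Itm q X :=
  Sum.inr (Sum.inr (Sum.inr (Sum.inr (Sum.inl i))))
def s16a (q : ℕ) {X : Type*} (r : Fin (4*q+1)) : S16Itm q X :=
  Sum.inr (Sum.inr (Sum.inr (Sum.inr (Sum.inr r))))

/-- Arc sets of the preference graphs (directed matchings), where the three elements of
`C_j` are `cx j, cy j, cz j`. -/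
def s16A (q : ℕ) {X : Type*} (cx cy cz : Fin (3*q) → X) :
    S16Agt q → Set (S16Itm q X × S16Itm q X)
  | .inl r => {p | (∃ t, t < 2*q ∧ p = (s16h q (2*t), s16h q (2*t+1))) ∨
      p = (s16h q (4*q), s16a q r)}
  | .inr (.inl _) => {p | ∃ i : Fin (3*q), p = (s16j q i, s16h q (i : ℕ))}
  | .inr (.inr (.inl c)) => {p | p = (s16j q c, s16b q c false) ∨
      p = (s16h q 0, s16b q c true) ∨
      (∃ t, t < 2*q - 1 ∧ p = (s16h q (2*t+1), s16h q (2*t+2)))}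
  | .inr (.inr (.inr c)) => {p | p = (s16b q c false, s16x q (cx c)) ∨
      p = (s16b q c true, s16x q (cy c)) ∨
      p = (s16h q 0, s16x q (cz c)) ∨
      (∃ t, t < 2*q - 2 ∧ p = (s16h q (2*t+1), s16h q (2*t+2))) ∨
      p = (s16h q (4*q - 3), s16e q c)}

/-- The vertex set of a directed matching: the endpoints of its arcs. -/
def VertsOf {α : Type*} (A : Set (α × α)) : Set α :=
  {v | ∃ u, (v, u) ∈ A ∨ (u, v) ∈ A}

section
variable {X : Type*} {q : ℕ} (cx cy cz : Fin (3*q) → X)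

lemma hinj {t t' : ℕ} (ht : t < 4*q+1) (ht' : t' < 4*q+1)
    (h : (s16h q t : S16Itm q X) = s16h q t') : t = t' := by
  simp only [s16h, Sum.inr.injEq, Sum.inl.injEq] at h
  have := congrArg Fin.val h
  simpa [Fin.val_ofNat, Nat.mod_eq_of_lt ht, Nat.mod_eq_of_lt ht'] using this

lemma no2D (r : Fin (4*q+1)) (a b c : S16Itm q X)
    (h1 : (a,b) ∈ s16A q cx cy cz (.inl r)) (h2 : (b,c) ∈ s16A q cx cy cz (.inl r)) : False := by
  simp only [s16A, Set.mem_setOf_eq, Prod.mk.injEq] at h1 h2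
  rcases h1 with ⟨t, ht, rfl, rfl⟩ | ⟨rfl, rfl⟩ <;>
    rcases h2 with ⟨u, hu, h, -⟩ | ⟨h, -⟩
  · exact absurd (hinj (by omega) (by omega) h.symm) (by omega)
  · exact absurd (hinj (by omega) (by omega) h.symm) (by omega)
  · simp [s16a, s16h] at h
  · simp [s16a, s16h] at h

lemma no2F (a b c : S16Itm q X)
    (h1 : (a,b) ∈ s16A q cx cy cz (.inr (.inl ()))) (h2 : (b,c) ∈ s16A q cx cy cz (.inr (.inl ()))) :
    False := by
  simp only [s16A, Set.mem_setOf_eq, Prod.mk.injEq] at h1 h2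
  obtain ⟨i, -, rfl⟩ := h1
  obtain ⟨i', h, -⟩ := h2
  simp [s16j, s16h] at h

lemma no2B (j : Fin (3*q)) (a b c : S16Itm q X)
    (h1 : (a,b) ∈ s16A q cx cy cz (.inr (.inr (.inl j))))
    (h2 : (b,c) ∈ s16A q cx cy cz (.inr (.inr (.inl j)))) : False := by
  simp only [s16A, Set.mem_setOf_eq, Prod.mk.injEq] at h1 h2
  rcases h1 with ⟨rfl, rfl⟩ | ⟨rfl, rfl⟩ | ⟨t, ht, rfl, rfl⟩ <;>
    rcases h2 with ⟨h, -⟩ | ⟨h, -⟩ | ⟨u, hu, h, -⟩ <;>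
      first
      | exact absurd (hinj (by omega) (by omega) h) (by omega)
      | exact absurd (hinj (by omega) (by omega) h.symm) (by omega)
      | (simp [s16j, s16h, s16b] at h)

lemma no2C (hq : 2 ≤ q) (j : Fin (3*q)) (a b c : S16Itm q X)
    (h1 : (a,b) ∈ s16A q cx cy cz (.inr (.inr (.inr j))))
    (h2 : (b,c) ∈ s16A q cx cy cz (.inr (.inr (.inr j)))) : False := by
  simp only [s16A, Set.mem_setOf_eq, Prod.mk.injEq] at h1 h2
  rcases h1 with ⟨rfl, rfl⟩ | ⟨rfl, rfl⟩ | ⟨rfl, rfl⟩ | ⟨t, ht, rfl, rfl⟩ | ⟨rfl, rfl⟩ <;>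
    rcases h2 with ⟨h, -⟩ | ⟨h, -⟩ | ⟨h, -⟩ | ⟨u, hu, h, -⟩ | ⟨h, -⟩ <;>
      first
      | exact absurd (hinj (by omega) (by omega) h) (by omega)
      | exact absurd (hinj (by omega) (by omega) h.symm) (by omega)
      | (simp [s16x, s16h, s16b, s16e] at h)
-- VertsOf membership lemmas
lemma memV_D_h (r : Fin (4*q+1)) {t : ℕ} (ht : t ≤ 4*q) :
    (s16h q t : S16Itm q X) ∈ VertsOf (s16A q cx cy cz (.inl r)) := by
  rcases Nat.even_or_odd t with ⟨k, hk⟩ | ⟨k, hk⟩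
  · by_cases h4 : t = 4*q
    · exact ⟨s16a q r, Or.inl (Or.inr (by rw [h4]))⟩
    · refine ⟨s16h q (t+1), Or.inl (Or.inl ⟨k, by omega, ?_⟩)⟩
      rw [show 2*k = t by omega]
  · refine ⟨s16h q (t-1), Or.inr (Or.inl ⟨k, by omega, ?_⟩)⟩
    rw [show 2*k+1 = t by omega, show 2*k = t - 1 by omega]

lemma memV_D_a (r : Fin (4*q+1)) :
    (s16a q r : S16Itm q X) ∈ VertsOf (s16A q cx cy cz (.inl r)) :=
  ⟨s16h q (4*q), Or.inr (Or.inr rfl)⟩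

lemma memV_F_j (i : Fin (3*q)) :
    (s16j q i : S16Itm q X) ∈ VertsOf (s16A q cx cy cz (.inr (.inl ()))) :=
  ⟨s16h q (i:ℕ), Or.inl ⟨i, rfl⟩⟩

lemma memV_F_h (i : Fin (3*q)) :
    (s16h q (i:ℕ) : S16Itm q X) ∈ VertsOf (s16A q cx cy cz (.inr (.inl ()))) :=
  ⟨s16j q i, Or.inr ⟨i, rfl⟩⟩

lemma memV_B_j (j : Fin (3*q)) :
    (s16j q j : S16Itm q X) ∈ VertsOf (s16A q cx cy cz (.inr (.inr (.inl j)))) :=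
  ⟨s16b q j false, Or.inl (Or.inl rfl)⟩

lemma memV_B_b0 (j : Fin (3*q)) :
    (s16b q j false : S16Itm q X) ∈ VertsOf (s16A q cx cy cz (.inr (.inr (.inl j)))) :=
  ⟨s16j q j, Or.inr (Or.inl rfl)⟩

lemma memV_B_b1 (j : Fin (3*q)) :
    (s16b q j true : S16Itm q X) ∈ VertsOf (s16A q cx cy cz (.inr (.inr (.inl j)))) :=
  ⟨s16h q 0, Or.inr (Or.inr (Or.inl rfl))⟩

lemma memV_C_b0 (j : Fin (3*q)) :
    (s16b q j false : S16Itm q X) ∈ VertsOf (s16A q cx cy cz (.inr (.inr (.inr j)))) :=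
  ⟨s16x q (cx j), Or.inl (Or.inl rfl)⟩

lemma memV_C_b1 (j : Fin (3*q)) :
    (s16b q j true : S16Itm q X) ∈ VertsOf (s16A q cx cy cz (.inr (.inr (.inr j)))) :=
  ⟨s16x q (cy j), Or.inl (Or.inr (Or.inl rfl))⟩

lemma memV_C_x (j : Fin (3*q)) :
    (s16x q (cx j) : S16Itm q X) ∈ VertsOf (s16A q cx cy cz (.inr (.inr (.inr j)))) :=
  ⟨s16b q j false, Or.inr (Or.inl rfl)⟩

lemma memV_C_y (j : Fin (3*q)) :
    (s16x q (cy j) : S16Itm q X) ∈ VertsOf (s16A q cx cy cz (.inr (.inr (.inr j)))) :=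
  ⟨s16b q j true, Or.inr (Or.inr (Or.inl rfl))⟩

lemma memV_C_z (j : Fin (3*q)) :
    (s16x q (cz j) : S16Itm q X) ∈ VertsOf (s16A q cx cy cz (.inr (.inr (.inr j)))) :=
  ⟨s16h q 0, Or.inr (Or.inr (Or.inr (Or.inl rfl)))⟩

lemma memV_C_e (j : Fin (3*q)) :
    (s16e q j : S16Itm q X) ∈ VertsOf (s16A q cx cy cz (.inr (.inr (.inr j)))) :=
  ⟨s16h q (4*q-3), Or.inr (Or.inr (Or.inr (Or.inr (Or.inr rfl))))⟩
-- VertsOf characterizations (forward inclusion)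
lemma vertsD_sub (r : Fin (4*q+1)) {v : S16Itm q X}
    (hv : v ∈ VertsOf (s16A q cx cy cz (.inl r))) :
    (∃ n ≤ 4*q, v = s16h q n) ∨ v = s16a q r := by
  obtain ⟨u, hu | hu⟩ := hv <;>
      simp only [s16A, Set.mem_setOf_eq, Prod.mk.injEq] at hu
  · rcases hu with ⟨t, ht, rfl, -⟩ | ⟨rfl, -⟩
    · exact Or.inl ⟨2*t, by omega, rfl⟩
    · exact Or.inl ⟨4*q, by omega, rfl⟩
  · rcases hu with ⟨t, ht, -, rfl⟩ | ⟨-, rfl⟩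
    · exact Or.inl ⟨2*t+1, by omega, rfl⟩
    · exact Or.inr rfl

lemma vertsF_sub {v : S16Itm q X}
    (hv : v ∈ VertsOf (s16A q cx cy cz (.inr (.inl ())))) :
    ∃ i : Fin (3*q), v = s16j q i ∨ v = s16h q (i:ℕ) := by
  obtain ⟨u, hu | hu⟩ := hv <;>
      simp only [s16A, Set.mem_setOf_eq, Prod.mk.injEq] at hu
  · obtain ⟨i, rfl, -⟩ := hu
    exact ⟨i, Or.inl rfl⟩
  · obtain ⟨i, -, rfl⟩ := hu
    exact ⟨i, Or.inr rfl⟩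

lemma vertsB_sub (hq2 : 2 ≤ q) (j : Fin (3*q)) {v : S16Itm q X}
    (hv : v ∈ VertsOf (s16A q cx cy cz (.inr (.inr (.inl j))))) :
    v = s16j q j ∨ v = s16b q j false ∨ v = s16b q j true ∨ ∃ n ≤ 4*q-2, v = s16h q n := by
  obtain ⟨u, hu | hu⟩ := hv <;>
      simp only [s16A, Set.mem_setOf_eq, Prod.mk.injEq] at hu
  · rcases hu with ⟨rfl, -⟩ | ⟨rfl, -⟩ | ⟨t, ht, rfl, -⟩
    · exact Or.inl rfl
    · exact Or.inr (Or.inr (Or.inr ⟨0, by omega, rfl⟩))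
    · exact Or.inr (Or.inr (Or.inr ⟨2*t+1, by omega, rfl⟩))
  · rcases hu with ⟨-, rfl⟩ | ⟨-, rfl⟩ | ⟨t, ht, -, rfl⟩
    · exact Or.inr (Or.inl rfl)
    · exact Or.inr (Or.inr (Or.inl rfl))
    · exact Or.inr (Or.inr (Or.inr ⟨2*t+2, by omega, rfl⟩))

lemma vertsC_sub (hq2 : 2 ≤ q) (j : Fin (3*q)) {v : S16Itm q X}
    (hv : v ∈ VertsOf (s16A q cx cy cz (.inr (.inr (.inr j))))) :
    v = s16b q j false ∨ v = s16b q j true ∨ v = s16x q (cx j) ∨ v = s16x q (cy j) ∨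
      v = s16x q (cz j) ∨ v = s16e q j ∨ ∃ n ≤ 4*q-3, v = s16h q n := by
  obtain ⟨u, hu | hu⟩ := hv <;>
      simp only [s16A, Set.mem_setOf_eq, Prod.mk.injEq] at hu
  · rcases hu with ⟨rfl, -⟩ | ⟨rfl, -⟩ | ⟨rfl, -⟩ | ⟨t, ht, rfl, -⟩ | ⟨rfl, -⟩
    · exact Or.inl rfl
    · exact Or.inr (Or.inl rfl)
    · exact Or.inr (Or.inr (Or.inr (Or.inr (Or.inr (Or.inr ⟨0, by omega, rfl⟩)))))
    · exact Or.inr (Or.inr (Or.inr (Or.inr (Or.inr (Or.inr ⟨2*t+1, by omega, rfl⟩)))))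
    · exact Or.inr (Or.inr (Or.inr (Or.inr (Or.inr (Or.inr ⟨4*q-3, by omega, rfl⟩)))))
  · rcases hu with ⟨-, rfl⟩ | ⟨-, rfl⟩ | ⟨-, rfl⟩ | ⟨t, ht, -, rfl⟩ | ⟨-, rfl⟩
    · exact Or.inr (Or.inr (Or.inl rfl))
    · exact Or.inr (Or.inr (Or.inr (Or.inl rfl)))
    · exact Or.inr (Or.inr (Or.inr (Or.inr (Or.inl rfl))))
    · exact Or.inr (Or.inr (Or.inr (Or.inr (Or.inr (Or.inr ⟨2*t+2, by omega, rfl⟩)))))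
    · exact Or.inr (Or.inr (Or.inr (Or.inr (Or.inr (Or.inl rfl)))))
open Classical in
noncomputable def s16pi (q : ℕ) {X : Type*} (cx cy cz : Fin (3*q) → X) (S : Set (Fin (3*q))) :
    S16Agt q → Set (S16Itm q X)
  | .inl r => {s16h q (r : ℕ), s16a q r}
  | .inr (.inl _) => {v | ∃ j ∈ S, v = s16j q j}
  | .inr (.inr (.inl j)) => if j ∈ S then {s16b q j false, s16b q j true} else {s16j q j}
  | .inr (.inr (.inr j)) =>
      if j ∈ S then {s16x q (cx j), s16x q (cy j), s16x q (cz j), s16e q j}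
      else {s16b q j false, s16b q j true}

lemma dominates_iff {α : Type*} {A : Set (α × α)}
    (h2 : ∀ a b c, (a,b) ∈ A → (b,c) ∈ A → False) {u v : α} :
    Dominates A u v ↔ u = v ∨ (u, v) ∈ A := by
  constructor
  · intro h
    rcases Relation.ReflTransGen.cases_head h with rfl | ⟨w, hw, hwv⟩
    · exact Or.inl rfl
    · rcases Relation.ReflTransGen.cases_head hwv with rfl | ⟨w', hw', -⟩
      · exact Or.inr hw
      · exact (h2 _ _ _ hw hw').elim
  · rintro (rfl | h)
    · exact Relation.ReflTransGen.refl
    · exact Relation.ReflTransGen.single h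
lemma ncard_le_finset' {α : Type*} {s : Set α} {t : Finset α} (h : s ⊆ ↑t) : s.ncard ≤ t.card :=
  (Set.ncard_le_ncard h t.finite_toSet).trans (Set.ncard_coe_finset t).le

lemma fwdD (S : Set (Fin (3*q))) (r : Fin (4*q+1)) :
    dissat (VertsOf (s16A q cx cy cz (.inl r))) (s16A q cx cy cz (.inl r))
      (s16pi q cx cy cz S (.inl r)) ≤ 4*q := by
  classical
  refine le_trans (ncard_le_finset' (t := (Finset.univ.erase r).image
      (fun t : Fin (4*q+1) => (s16h q (t:ℕ) : S16Itm q X))) ?_) ?_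
  · rintro v ⟨hv, hns⟩
    rcases vertsD_sub cx cy cz r hv with ⟨n, hn, rfl⟩ | rfl
    · by_cases hr : n = (r:ℕ)
      · exact absurd ⟨s16h q n, by simp [s16pi, hr], memV_D_h cx cy cz r hn,
          Relation.ReflTransGen.refl⟩ hns
      · refine Finset.mem_coe.mpr (Finset.mem_image.mpr ⟨⟨n, by omega⟩,
          Finset.mem_erase.mpr ⟨Fin.ne_of_val_ne hr, Finset.mem_univ _⟩, rfl⟩)
    · exact absurd ⟨s16a q r, by simp [s16pi], memV_D_a cx cy cz r,
        Relation.ReflTransGen.refl⟩ hns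
  · calc ((Finset.univ.erase r).image _).card ≤ (Finset.univ.erase r).card :=
          Finset.card_image_le
      _ = 4*q := by simp [Finset.card_erase_of_mem]
lemma arcF_mem (i : Fin (3*q)) :
    ((s16j q i, s16h q (i:ℕ)) : S16Itm q X × S16Itm q X) ∈ s16A q cx cy cz (.inr (.inl ())) := by
  simp only [s16A, Set.mem_setOf_eq]; exact ⟨i, rfl⟩

lemma fwdF (S : Set (Fin (3*q))) (T : Finset (Fin (3*q))) (hT : ∀ j, j ∈ T ↔ j ∈ S)
    (hTq : q ≤ T.card) :
    dissat (VertsOf (s16A q cx cy cz (.inr (.inl ())))) (s16A q cx cy cz (.inr (.inl ())))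
      (s16pi q cx cy cz S (.inr (.inl ()))) ≤ 4*q := by
  classical
  refine le_trans (ncard_le_finset' (t :=
      ((Finset.univ \ T).image fun i => (s16j q i : S16Itm q X)) ∪
      ((Finset.univ \ T).image fun i : Fin (3*q) => (s16h q (i:ℕ) : S16Itm q X))) ?_) ?_
  · rintro v ⟨hv, hns⟩
    obtain ⟨i, rfl | rfl⟩ := vertsF_sub cx cy cz hv
    · by_cases hi : i ∈ S
      · exact absurd ⟨s16j q i, by simp only [s16pi, Set.mem_setOf_eq]; exact ⟨i, hi, rfl⟩,
          memV_F_j cx cy cz i, Relation.ReflTransGen.refl⟩ hns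
      · exact Finset.mem_coe.mpr (Finset.mem_union_left _ (Finset.mem_image.mpr
          ⟨i, Finset.mem_sdiff.mpr ⟨Finset.mem_univ _, fun h => hi ((hT i).1 h)⟩, rfl⟩))
    · by_cases hi : i ∈ S
      · exact absurd ⟨s16j q i, by simp only [s16pi, Set.mem_setOf_eq]; exact ⟨i, hi, rfl⟩,
          memV_F_j cx cy cz i,
          Relation.ReflTransGen.single (arcF_mem cx cy cz i)⟩ hns
      · exact Finset.mem_coe.mpr (Finset.mem_union_right _ (Finset.mem_image.mpr
          ⟨i, Finset.mem_sdiff.mpr ⟨Finset.mem_univ _, fun h => hi ((hT i).1 h)⟩, rfl⟩))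
  · have hcard : (Finset.univ \ T).card ≤ 2*q := by
      rw [Finset.card_sdiff_of_subset (Finset.subset_univ _)]
      simp only [Finset.card_univ, Fintype.card_fin]
      omega
    calc _ ≤ ((Finset.univ \ T).image fun i => (s16j q i : S16Itm q X)).card +
          ((Finset.univ \ T).image fun i : Fin (3*q) => (s16h q (i:ℕ) : S16Itm q X)).card :=
        Finset.card_union_le _ _
      _ ≤ 2*q + 2*q := Nat.add_le_add (le_trans Finset.card_image_le hcard)
          (le_trans Finset.card_image_le hcard)
      _ = 4*q := by ring

lemma fwdB (hq2 : 2 ≤ q) (S : Set (Fin (3*q))) (j : Fin (3*q)) :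
    dissat (VertsOf (s16A q cx cy cz (.inr (.inr (.inl j)))))
      (s16A q cx cy cz (.inr (.inr (.inl j))))
      (s16pi q cx cy cz S (.inr (.inr (.inl j)))) ≤ 4*q := by
  classical
  have harc0 : ((s16j q j, s16b q j false) : S16Itm q X × S16Itm q X) ∈
      s16A q cx cy cz (.inr (.inr (.inl j))) := by
    simp [s16A]
  by_cases hjS : j ∈ S
  · refine le_trans (ncard_le_finset' (t := insert (s16j q j)
        ((Finset.range (4*q-1)).image fun n => (s16h q n : S16Itm q X))) ?_) ?_
    · rintro v ⟨hv, hns⟩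
      rcases vertsB_sub cx cy cz hq2 j hv with rfl | rfl | rfl | ⟨n, hn, rfl⟩
      · exact Finset.mem_coe.mpr (Finset.mem_insert_self _ _)
      · exact absurd ⟨s16b q j false, by simp [s16pi, hjS], memV_B_b0 cx cy cz j,
          Relation.ReflTransGen.refl⟩ hns
      · exact absurd ⟨s16b q j true, by simp [s16pi, hjS], memV_B_b1 cx cy cz j,
          Relation.ReflTransGen.refl⟩ hns
      · exact Finset.mem_coe.mpr (Finset.mem_insert_of_mem (Finset.mem_image.mpr
          ⟨n, Finset.mem_range.mpr (by omega), rfl⟩))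
    · calc _ ≤ ((Finset.range (4*q-1)).image fun n => (s16h q n : S16Itm q X)).card + 1 :=
          Finset.card_insert_le _ _
        _ ≤ (4*q-1) + 1 := Nat.add_le_add_right
            (le_trans Finset.card_image_le (by simp)) 1
        _ ≤ 4*q := by omega
  · refine le_trans (ncard_le_finset' (t := insert (s16b q j true)
        ((Finset.range (4*q-1)).image fun n => (s16h q n : S16Itm q X))) ?_) ?_
    · rintro v ⟨hv, hns⟩
      rcases vertsB_sub cx cy cz hq2 j hv with rfl | rfl | rfl | ⟨n, hn, rfl⟩
      · exact absurd ⟨s16j q j, by simp [s16pi, hjS], memV_B_j cx cy cz j,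
          Relation.ReflTransGen.refl⟩ hns
      · exact absurd ⟨s16j q j, by simp [s16pi, hjS], memV_B_j cx cy cz j,
          Relation.ReflTransGen.single harc0⟩ hns
      · exact Finset.mem_coe.mpr (Finset.mem_insert_self _ _)
      · exact Finset.mem_coe.mpr (Finset.mem_insert_of_mem (Finset.mem_image.mpr
          ⟨n, Finset.mem_range.mpr (by omega), rfl⟩))
    · calc _ ≤ ((Finset.range (4*q-1)).image fun n => (s16h q n : S16Itm q X)).card + 1 :=
          Finset.card_insert_le _ _
        _ ≤ (4*q-1) + 1 := Nat.add_le_add_right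
            (le_trans Finset.card_image_le (by simp)) 1
        _ ≤ 4*q := by omega

lemma fwdC (hq2 : 2 ≤ q) (S : Set (Fin (3*q))) (j : Fin (3*q)) :
    dissat (VertsOf (s16A q cx cy cz (.inr (.inr (.inr j)))))
      (s16A q cx cy cz (.inr (.inr (.inr j))))
      (s16pi q cx cy cz S (.inr (.inr (.inr j)))) ≤ 4*q := by
  classical
  have harcx : ((s16b q j false, s16x q (cx j)) : S16Itm q X × S16Itm q X) ∈
      s16A q cx cy cz (.inr (.inr (.inr j))) := by
    simp [s16A]
  have harcy : ((s16b q j true, s16x q (cy j)) : S16Itm q X × S16Itm q X) ∈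
      s16A q cx cy cz (.inr (.inr (.inr j))) := by
    simp [s16A]
  by_cases hjS : j ∈ S
  · refine le_trans (ncard_le_finset' (t := insert (s16b q j false) (insert (s16b q j true)
        ((Finset.range (4*q-2)).image fun n => (s16h q n : S16Itm q X)))) ?_) ?_
    · rintro v ⟨hv, hns⟩
      rcases vertsC_sub cx cy cz hq2 j hv with rfl | rfl | rfl | rfl | rfl | rfl | ⟨n, hn, rfl⟩
      · exact Finset.mem_coe.mpr (Finset.mem_insert_self _ _)
      · exact Finset.mem_coe.mpr (Finset.mem_insert_of_mem (Finset.mem_insert_self _ _))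
      · exact absurd ⟨s16x q (cx j), by simp [s16pi, hjS], memV_C_x cx cy cz j,
          Relation.ReflTransGen.refl⟩ hns
      · exact absurd ⟨s16x q (cy j), by simp [s16pi, hjS], memV_C_y cx cy cz j,
          Relation.ReflTransGen.refl⟩ hns
      · exact absurd ⟨s16x q (cz j), by simp [s16pi, hjS], memV_C_z cx cy cz j,
          Relation.ReflTransGen.refl⟩ hns
      · exact absurd ⟨s16e q j, by simp [s16pi, hjS], memV_C_e cx cy cz j,
          Relation.ReflTransGen.refl⟩ hns
      · exact Finset.mem_coe.mpr (Finset.mem_insert_of_mem (Finset.mem_insert_of_mem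
          (Finset.mem_image.mpr ⟨n, Finset.mem_range.mpr (by omega), rfl⟩)))
    · calc _ ≤ (insert (s16b q j true)
            ((Finset.range (4*q-2)).image fun n => (s16h q n : S16Itm q X))).card + 1 :=
          Finset.card_insert_le _ _
        _ ≤ (((Finset.range (4*q-2)).image fun n => (s16h q n : S16Itm q X)).card + 1) + 1 :=
          Nat.add_le_add_right (Finset.card_insert_le _ _) 1
        _ ≤ ((4*q-2) + 1) + 1 := by
          have := (Finset.card_image_le (s := Finset.range (4*q-2))
            (f := fun n => (s16h q n : S16Itm q X)))
          simp only [Finset.card_range] at this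
          omega
        _ ≤ 4*q := by omega
  · refine le_trans (ncard_le_finset' (t := insert (s16x q (cz j)) (insert (s16e q j)
        ((Finset.range (4*q-2)).image fun n => (s16h q n : S16Itm q X)))) ?_) ?_
    · rintro v ⟨hv, hns⟩
      rcases vertsC_sub cx cy cz hq2 j hv with rfl | rfl | rfl | rfl | rfl | rfl | ⟨n, hn, rfl⟩
      · exact absurd ⟨s16b q j false, by simp [s16pi, hjS], memV_C_b0 cx cy cz j,
          Relation.ReflTransGen.refl⟩ hns
      · exact absurd ⟨s16b q j true, by simp [s16pi, hjS], memV_C_b1 cx cy cz j,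
          Relation.ReflTransGen.refl⟩ hns
      · exact absurd ⟨s16b q j false, by simp [s16pi, hjS], memV_C_b0 cx cy cz j,
          Relation.ReflTransGen.single harcx⟩ hns
      · exact absurd ⟨s16b q j true, by simp [s16pi, hjS], memV_C_b1 cx cy cz j,
          Relation.ReflTransGen.single harcy⟩ hns
      · exact Finset.mem_coe.mpr (Finset.mem_insert_self _ _)
      · exact Finset.mem_coe.mpr (Finset.mem_insert_of_mem (Finset.mem_insert_self _ _))
      · exact Finset.mem_coe.mpr (Finset.mem_insert_of_mem (Finset.mem_insert_of_mem
          (Finset.mem_image.mpr ⟨n, Finset.mem_range.mpr (by omega), rfl⟩)))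
    · calc _ ≤ (insert (s16e q j)
            ((Finset.range (4*q-2)).image fun n => (s16h q n : S16Itm q X))).card + 1 :=
          Finset.card_insert_le _ _
        _ ≤ (((Finset.range (4*q-2)).image fun n => (s16h q n : S16Itm q X)).card + 1) + 1 :=
          Nat.add_le_add_right (Finset.card_insert_le _ _) 1
        _ ≤ ((4*q-2) + 1) + 1 := by
          have := (Finset.card_image_le (s := Finset.range (4*q-2))
            (f := fun n => (s16h q n : S16Itm q X)))
          simp only [Finset.card_range] at this
          omega
        _ ≤ 4*q := by omega

lemma cover_card {X : Type*} [Fintype X] [DecidableEq X] {q : ℕ} (hX : Fintype.card X = 3*q)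
    (C : Fin (3*q) → Finset X) (hC3 : ∀ j, (C j).card = 3)
    (S : Set (Fin (3*q))) (hS : ∀ x : X, ∃! j, j ∈ S ∧ x ∈ C j)
    (T : Finset (Fin (3*q))) (hT : ∀ j, j ∈ T ↔ j ∈ S) : T.card = q := by
  have hdisj : ∀ j ∈ T, ∀ j' ∈ T, j ≠ j' → Disjoint (C j) (C j') := by
    intro j hj j' hj' hne
    rw [Finset.disjoint_left]
    intro x hx hx'
    exact hne ((hS x).unique ⟨(hT j).1 hj, hx⟩ ⟨(hT j').1 hj', hx'⟩)
  have hcov : T.biUnion C = Finset.univ := by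
    apply Finset.eq_univ_of_forall; intro x
    obtain ⟨j, ⟨hjS, hjx⟩, -⟩ := hS x
    exact Finset.mem_biUnion.mpr ⟨j, (hT j).2 hjS, hjx⟩
  have h1 := Finset.card_biUnion hdisj
  rw [hcov] at h1
  have h2 : ∑ j ∈ T, (C j).card = 3 * T.card := by
    rw [Finset.sum_congr rfl fun j _ => hC3 j]
    simp [mul_comm]
  rw [Finset.card_univ, hX, h2] at h1
  omega
lemma memV_B_h (hq2 : 2 ≤ q) (j : Fin (3*q)) {n : ℕ} (hn : n ≤ 4*q-2) :
    (s16h q n : S16Itm q X) ∈ VertsOf (s16A q cx cy cz (.inr (.inr (.inl j)))) := by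
  rcases Nat.even_or_odd n with ⟨k, hk⟩ | ⟨k, hk⟩
  · by_cases h0 : n = 0
    · exact ⟨s16b q j true, Or.inl (Or.inr (Or.inl (by rw [h0])))⟩
    · refine ⟨s16h q (n-1), Or.inr (Or.inr (Or.inr ⟨k-1, by omega, ?_⟩))⟩
      rw [show 2*(k-1)+1 = n-1 by omega, show 2*(k-1)+2 = n by omega]
  · refine ⟨s16h q (n+1), Or.inl (Or.inr (Or.inr ⟨k, by omega, ?_⟩))⟩
    rw [show 2*k+1 = n by omega, show 2*k+2 = n+1 by omega]

lemma memV_C_h (hq2 : 2 ≤ q) (j : Fin (3*q)) {n : ℕ} (hn : n ≤ 4*q-3) :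
    (s16h q n : S16Itm q X) ∈ VertsOf (s16A q cx cy cz (.inr (.inr (.inr j)))) := by
  rcases Nat.even_or_odd n with ⟨k, hk⟩ | ⟨k, hk⟩
  · by_cases h0 : n = 0
    · exact ⟨s16x q (cz j), Or.inl (Or.inr (Or.inr (Or.inl (by rw [h0]))))⟩
    · refine ⟨s16h q (n-1), Or.inr (Or.inr (Or.inr (Or.inr (Or.inl ⟨k-1, by omega, ?_⟩))))⟩
      rw [show 2*(k-1)+1 = n-1 by omega, show 2*(k-1)+2 = n by omega]
  · by_cases h4 : n = 4*q-3
    · exact ⟨s16e q j, Or.inl (Or.inr (Or.inr (Or.inr (Or.inr (by rw [h4])))))⟩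
    · refine ⟨s16h q (n+1), Or.inl (Or.inr (Or.inr (Or.inr (Or.inl ⟨k, by omega, ?_⟩))))⟩
      rw [show 2*k+1 = n by omega, show 2*k+2 = n+1 by omega]

open Classical in
noncomputable def s16owner (q : ℕ) {X : Type*} (S : Set (Fin (3*q))) (f : X → Fin (3*q)) :
    S16Itm q X → S16Agt q
  | .inl x => .inr (.inr (.inr (f x)))
  | .inr (.inl t) => .inl t
  | .inr (.inr (.inl i)) => if i ∈ S then .inr (.inl ()) else .inr (.inr (.inl i))
  | .inr (.inr (.inr (.inl (i, _)))) =>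
      if i ∈ S then .inr (.inr (.inl i)) else .inr (.inr (.inr i))
  | .inr (.inr (.inr (.inr (.inl i)))) => .inr (.inr (.inr i))
  | .inr (.inr (.inr (.inr (.inr r)))) => .inl r

lemma s16pi_alloc {C : Fin (3*q) → Finset X} (S : Set (Fin (3*q)))
    (hS : ∀ x : X, ∃! j, j ∈ S ∧ x ∈ C j)
    (hmx : ∀ j, cx j ∈ C j) (hmy : ∀ j, cy j ∈ C j) (hmz : ∀ j, cz j ∈ C j) :
    IsAllocation (s16pi q cx cy cz S) := by
  classical
  have hex : ∀ x : X, ∃ j, j ∈ S ∧ x ∈ C j := fun x => (hS x).exists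
  set f : X → Fin (3*q) := fun x => (hex x).choose with hf
  have hfS : ∀ x, f x ∈ S := fun x => (hex x).choose_spec.1
  have hfC : ∀ x, x ∈ C (f x) := fun x => (hex x).choose_spec.2
  have hfeq : ∀ (j : Fin (3*q)) (x : X), j ∈ S → x ∈ C j → f x = j := by
    intro j x hj hx
    exact (hS x).unique ⟨hfS x, hfC x⟩ ⟨hj, hx⟩
  have hsub : ∀ a v, v ∈ s16pi q cx cy cz S a → s16owner q S f v = a := by
    rintro (r | ⟨⟩ | j | j) v hv
    · simp only [s16pi, Set.mem_insert_iff, Set.mem_singleton_iff] at hv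
      rcases hv with rfl | rfl
      · simp only [s16h, s16owner, Fin.ofNat_val_eq_self]
      · simp only [s16a, s16owner]
    · simp only [s16pi, Set.mem_setOf_eq] at hv
      obtain ⟨j, hjS, rfl⟩ := hv
      simp only [s16j, s16owner, if_pos hjS]
    · by_cases hjS : j ∈ S
      · simp only [s16pi, if_pos hjS, Set.mem_insert_iff, Set.mem_singleton_iff] at hv
        rcases hv with rfl | rfl <;> simp only [s16b, s16owner, if_pos hjS]
      · simp only [s16pi, if_neg hjS, Set.mem_singleton_iff] at hv
        subst hv; simp only [s16j, s16owner, if_neg hjS]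
    · by_cases hjS : j ∈ S
      · simp only [s16pi, if_pos hjS, Set.mem_insert_iff, Set.mem_singleton_iff] at hv
        rcases hv with rfl | rfl | rfl | rfl
        · simp only [s16x, s16owner, hfeq j (cx j) hjS (hmx j)]
        · simp only [s16x, s16owner, hfeq j (cy j) hjS (hmy j)]
        · simp only [s16x, s16owner, hfeq j (cz j) hjS (hmz j)]
        · simp only [s16e, s16owner]
      · simp only [s16pi, if_neg hjS, Set.mem_insert_iff, Set.mem_singleton_iff] at hv
        rcases hv with rfl | rfl <;> simp only [s16b, s16owner, if_neg hjS]
  intro i j hne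
  rw [Set.disjoint_left]
  intro v hvi hvj
  exact hne ((hsub i v hvi).symm.trans (hsub j v hvj))

lemma three_distinct {a b c : X} (h : ({a, b, c} : Set X).ncard = 3) :
    a ≠ b ∧ a ≠ c ∧ b ≠ c := by
  refine ⟨?_, ?_, ?_⟩ <;> rintro rfl
  · have : ({a, a, c} : Set X) = {a, c} := by simp
    rw [this] at h
    have := Set.ncard_insert_le a {c}
    simp [Set.ncard_singleton] at this
    omega
  · have : ({a, b, a} : Set X) = {a, b} := by
      ext z; simp; tauto
    rw [this] at h
    have := Set.ncard_insert_le a {b}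
    simp [Set.ncard_singleton] at this
    omega
  · have : ({a, b, b} : Set X) = {a, b} := by simp
    rw [this] at h
    have := Set.ncard_insert_le a {b}
    simp [Set.ncard_singleton] at this
    omega
lemma finset_le_ncard' {α : Type*} {s : Set α} {t : Finset α} (h : ↑t ⊆ s) (hs : s.Finite) :
    t.card ≤ s.ncard :=
  (Set.ncard_coe_finset t).ge.trans (Set.ncard_le_ncard h hs)

lemma le_dissat {α : Type*} [Finite α] {Vi P : Set α} {A : Set (α × α)} {t : Finset α}
    (h : ∀ v ∈ t, v ∈ Vi ∧ ¬∃ u, u ∈ P ∧ u ∈ Vi ∧ Dominates A u v) :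
    t.card ≤ dissat Vi A P :=
  finset_le_ncard' (fun v hv => h v (Finset.mem_coe.1 hv)) (Set.toFinite _)

variable [Fintype X]

lemma bwd_h (π : S16Agt q → Set (S16Itm q X)) (halloc : IsAllocation π)
    (hdis : ∀ a, dissat (VertsOf (s16A q cx cy cz a)) (s16A q cx cy cz a) (π a) ≤ 4*q)
    {n : ℕ} (hn : n < 4*q+1) {a : S16Agt q} (ha : ∀ r, a ≠ .inl r) :
    (s16h q n : S16Itm q X) ∉ π a := by
  classical
  have hDh : ∀ r : Fin (4*q+1), ∃ t : Fin (4*q+1), s16h q (t:ℕ) ∈ π (.inl r) := by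
    intro r
    by_contra hno
    push_neg at hno
    have hsub : ∀ v ∈ (Finset.univ.image fun t : Fin (4*q+1) => (s16h q (t:ℕ) : S16Itm q X)),
        v ∈ VertsOf (s16A q cx cy cz (.inl r)) ∧
        ¬∃ u, u ∈ π (.inl r) ∧ u ∈ VertsOf (s16A q cx cy cz (.inl r)) ∧
          Dominates (s16A q cx cy cz (.inl r)) u v := by
      intro v hv
      simp only [Finset.mem_image, Finset.mem_univ, true_and] at hv
      obtain ⟨t, rfl⟩ := hv
      have hlt := t.isLt
      refine ⟨memV_D_h cx cy cz r (by omega), ?_⟩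
      rintro ⟨u, huπ, -, hdom⟩
      rcases (dominates_iff (fun a b c => no2D cx cy cz r a b c)).1 hdom with rfl | harc
      · exact hno t huπ
      · simp only [s16A, Set.mem_setOf_eq, Prod.mk.injEq] at harc
        rcases harc with ⟨k, hk, rfl, -⟩ | ⟨rfl, heq⟩
        · exact hno ⟨2*k, by omega⟩ huπ
        · exact absurd heq (by simp [s16h, s16a])
    have hcard : (Finset.univ.image fun t : Fin (4*q+1) =>
        (s16h q (t:ℕ) : S16Itm q X)).card = 4*q+1 := by
      rw [Finset.card_image_of_injective _
        (fun t t' h => Fin.val_injective (hinj t.isLt t'.isLt h))]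
      simp
    have h1 := le_dissat hsub
    rw [hcard] at h1
    have h2 := hdis (.inl r)
    omega
  choose f hf using hDh
  have hinjf : Function.Injective f := by
    intro r r' h
    by_contra hne
    have hd := halloc (show (.inl r : S16Agt q) ≠ .inl r' from fun hh => hne (by injection hh))
    have h1 := hf r
    rw [h] at h1
    exact Set.disjoint_left.1 hd h1 (hf r')
  have hsurf := Finite.injective_iff_surjective.mp hinjf
  intro hmem
  obtain ⟨r, hr⟩ := hsurf ⟨n, hn⟩
  have h1 : (s16h q n : S16Itm q X) ∈ π (.inl r) := by
    have h2 := hf r; rw [hr] at h2; exact h2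
  exact Set.disjoint_left.1 (halloc (ha r)) hmem h1

lemma bwd_T (π : S16Agt q → Set (S16Itm q X)) (halloc : IsAllocation π)
    (hdis : ∀ a, dissat (VertsOf (s16A q cx cy cz a)) (s16A q cx cy cz a) (π a) ≤ 4*q)
    (hH : ∀ (n:ℕ), n < 4*q+1 → ∀ a : S16Agt q, (∀ r, a ≠ .inl r) →
      (s16h q n : S16Itm q X) ∉ π a) :
    ∃ T : Finset (Fin (3*q)), (∀ j, j ∈ T ↔ s16j q j ∈ π (.inr (.inl ()))) ∧ q ≤ T.card := by
  classical
  refine ⟨Set.Finite.toFinset (Set.toFinite {j : Fin (3*q) | s16j q j ∈ π (.inr (.inl ()))}),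
    fun j => Set.Finite.mem_toFinset _, ?_⟩
  set T := Set.Finite.toFinset (Set.toFinite {j : Fin (3*q) | s16j q j ∈ π (.inr (.inl ()))})
    with hT
  have hTmem : ∀ j, j ∈ T ↔ s16j q j ∈ π (.inr (.inl ())) := fun j => Set.Finite.mem_toFinset _
  by_contra hlt
  push_neg at hlt
  set U := ((Finset.univ \ T).image fun i : Fin (3*q) => (s16j q i : S16Itm q X)) ∪
      ((Finset.univ \ T).image fun i : Fin (3*q) => (s16h q (i:ℕ) : S16Itm q X)) with hU
  have hUsub : ∀ v ∈ U, v ∈ VertsOf (s16A q cx cy cz (.inr (.inl ()))) ∧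
      ¬∃ u, u ∈ π (.inr (.inl ())) ∧ u ∈ VertsOf (s16A q cx cy cz (.inr (.inl ()))) ∧
        Dominates (s16A q cx cy cz (.inr (.inl ()))) u v := by
    intro v hv
    rw [hU, Finset.mem_union] at hv
    rcases hv with hv | hv
    · rw [Finset.mem_image] at hv
      obtain ⟨i, hi, rfl⟩ := hv
      rw [Finset.mem_sdiff] at hi
      rw [hTmem] at hi
      refine ⟨memV_F_j cx cy cz i, ?_⟩
      rintro ⟨u, huπ, -, hdom⟩
      rcases (dominates_iff (fun a b c => no2F cx cy cz a b c)).1 hdom with rfl | harc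
      · exact hi.2 huπ
      · simp only [s16A, Set.mem_setOf_eq, Prod.mk.injEq] at harc
        obtain ⟨i', -, heq⟩ := harc
        exact absurd heq (by simp [s16j, s16h])
    · rw [Finset.mem_image] at hv
      obtain ⟨i, hi, rfl⟩ := hv
      rw [Finset.mem_sdiff] at hi
      rw [hTmem] at hi
      have hilt := i.isLt
      refine ⟨memV_F_h cx cy cz i, ?_⟩
      rintro ⟨u, huπ, -, hdom⟩
      rcases (dominates_iff (fun a b c => no2F cx cy cz a b c)).1 hdom with rfl | harc
      · exact hH (i:ℕ) (by omega) _ (fun r => by simp) huπ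
      · simp only [s16A, Set.mem_setOf_eq, Prod.mk.injEq] at harc
        obtain ⟨i', rfl, heq⟩ := harc
        have hilt' := i'.isLt
        have : (i':ℕ) = (i:ℕ) := hinj (q := q) (X := X) (t := (i':ℕ)) (t' := (i:ℕ)) (by omega) (by omega) heq.symm
        rw [Fin.val_injective this] at huπ
        exact hi.2 huπ
  have hUcard : U.card = 2 * (3*q - T.card) := by
    rw [hU, Finset.card_union_of_disjoint, Finset.card_image_of_injective _
        (fun a b h => by simpa [s16j] using h),
      Finset.card_image_of_injective _
        (fun a b h => Fin.val_injective
          (hinj (Nat.lt_of_lt_of_le a.isLt (by omega)) (Nat.lt_of_lt_of_le b.isLt (by omega)) h)),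
      Finset.card_sdiff_of_subset (Finset.subset_univ _)]
    · simp only [Finset.card_univ, Fintype.card_fin]; omega
    · rw [Finset.disjoint_left]
      rintro a ha hb
      rw [Finset.mem_image] at ha hb
      obtain ⟨i, -, rfl⟩ := ha
      obtain ⟨i', -, heq⟩ := hb
      exact absurd heq (by simp [s16j, s16h])
  have h1 := le_dissat hUsub
  have h2 := hdis (.inr (.inl ()))
  have hTle : T.card ≤ 3*q := le_trans (Finset.card_le_univ T) (by simp)
  omega
lemma bwd_b (hq2 : 2 ≤ q) (π : S16Agt q → Set (S16Itm q X)) (halloc : IsAllocation π)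
    (hdis : ∀ a, dissat (VertsOf (s16A q cx cy cz a)) (s16A q cx cy cz a) (π a) ≤ 4*q)
    (hH : ∀ (n:ℕ), n < 4*q+1 → ∀ a : S16Agt q, (∀ r, a ≠ .inl r) →
      (s16h q n : S16Itm q X) ∉ π a)
    (j : Fin (3*q)) (hjF : s16j q j ∈ π (.inr (.inl ()))) :
    s16b q j false ∈ π (.inr (.inr (.inl j))) ∧ s16b q j true ∈ π (.inr (.inr (.inl j))) := by
  classical
  have hFneB : (.inr (.inl ()) : S16Agt q) ≠ .inr (.inr (.inl j)) := by simp
  have hjB : s16j q j ∉ π (.inr (.inr (.inl j))) :=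
    fun h => Set.disjoint_left.1 (halloc hFneB) hjF h
  have himg : ((Finset.range (4*q-1)).image fun n => (s16h q n : S16Itm q X)).card = 4*q-1 := by
    have hinj1 : Set.InjOn (fun n => (s16h q n : S16Itm q X)) (Finset.range (4*q-1)) := by
      intro a ha b hb h
      rw [Finset.coe_range, Set.mem_Iio] at ha hb
      exact hinj (by omega) (by omega) h
    rw [Finset.card_image_of_injOn hinj1, Finset.card_range]
  have hjcase : ∀ P : Set (S16Itm q X), P = π (.inr (.inr (.inl j))) →
      (s16j q j : S16Itm q X) ∈ VertsOf (s16A q cx cy cz (.inr (.inr (.inl j)))) ∧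
      ¬∃ u, u ∈ π (.inr (.inr (.inl j))) ∧
        u ∈ VertsOf (s16A q cx cy cz (.inr (.inr (.inl j)))) ∧
        Dominates (s16A q cx cy cz (.inr (.inr (.inl j)))) u (s16j q j) := by
    rintro P rfl
    refine ⟨memV_B_j cx cy cz j, ?_⟩
    rintro ⟨u, huπ, -, hdom⟩
    rcases (dominates_iff (fun a b c => no2B cx cy cz j a b c)).1 hdom with rfl | harc
    · exact hjB huπ
    · simp only [s16A, Set.mem_setOf_eq, Prod.mk.injEq] at harc
      rcases harc with ⟨-, heq⟩ | ⟨-, heq⟩ | ⟨t, -, -, heq⟩ <;> simp [s16j, s16b, s16h] at heq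
  have hhcase : ∀ n : ℕ, n ≤ 4*q-2 →
      (s16h q n : S16Itm q X) ∈ VertsOf (s16A q cx cy cz (.inr (.inr (.inl j)))) ∧
      ¬∃ u, u ∈ π (.inr (.inr (.inl j))) ∧
        u ∈ VertsOf (s16A q cx cy cz (.inr (.inr (.inl j)))) ∧
        Dominates (s16A q cx cy cz (.inr (.inr (.inl j)))) u (s16h q n) := by
    intro n hn
    refine ⟨memV_B_h cx cy cz hq2 j hn, ?_⟩
    rintro ⟨u, huπ, -, hdom⟩
    rcases (dominates_iff (fun a b c => no2B cx cy cz j a b c)).1 hdom with rfl | harc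
    · exact hH n (by omega) _ (fun r => by simp) huπ
    · simp only [s16A, Set.mem_setOf_eq, Prod.mk.injEq] at harc
      rcases harc with ⟨-, heq⟩ | ⟨-, heq⟩ | ⟨t, ht, rfl, -⟩
      · simp [s16b, s16h] at heq
      · simp [s16b, s16h] at heq
      · exact hH (2*t+1) (by omega) _ (fun r => by simp) huπ
  constructor
  · by_contra hb0
    set U := insert (s16j q j) (insert (s16b q j false)
      ((Finset.range (4*q-1)).image fun n => (s16h q n : S16Itm q X))) with hUdef
    have hb0img : (s16b q j false : S16Itm q X) ∉
        (Finset.range (4*q-1)).image fun n => (s16h q n : S16Itm q X) := by simp [s16b, s16h]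
    have hjU : (s16j q j : S16Itm q X) ∉ insert (s16b q j false)
        ((Finset.range (4*q-1)).image fun n => (s16h q n : S16Itm q X)) := by
      simp [s16j, s16b, s16h]
    have hcard : U.card = 4*q+1 := by
      rw [hUdef, Finset.card_insert_of_notMem hjU, Finset.card_insert_of_notMem hb0img, himg]
      omega
    have hsub : ∀ v ∈ U, v ∈ VertsOf (s16A q cx cy cz (.inr (.inr (.inl j)))) ∧
        ¬∃ u, u ∈ π (.inr (.inr (.inl j))) ∧
          u ∈ VertsOf (s16A q cx cy cz (.inr (.inr (.inl j)))) ∧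
          Dominates (s16A q cx cy cz (.inr (.inr (.inl j)))) u v := by
      intro v hv
      rw [hUdef] at hv
      rcases Finset.mem_insert.1 hv with rfl | hv
      · exact hjcase _ rfl
      rcases Finset.mem_insert.1 hv with rfl | hv
      · refine ⟨memV_B_b0 cx cy cz j, ?_⟩
        rintro ⟨u, huπ, -, hdom⟩
        rcases (dominates_iff (fun a b c => no2B cx cy cz j a b c)).1 hdom with rfl | harc
        · exact hb0 huπ
        · simp only [s16A, Set.mem_setOf_eq, Prod.mk.injEq] at harc
          rcases harc with ⟨rfl, -⟩ | ⟨-, heq⟩ | ⟨t, -, -, heq⟩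
          · exact hjB huπ
          · simp [s16b] at heq
          · simp [s16b, s16h] at heq
      · obtain ⟨n, hn, rfl⟩ := Finset.mem_image.1 hv
        rw [Finset.mem_range] at hn
        exact hhcase n (by omega)
    have h1 := le_dissat hsub
    rw [hcard] at h1
    have h2 := hdis (.inr (.inr (.inl j)))
    omega
  · by_contra hb1
    set U := insert (s16j q j) (insert (s16b q j true)
      ((Finset.range (4*q-1)).image fun n => (s16h q n : S16Itm q X))) with hUdef
    have hb1img : (s16b q j true : S16Itm q X) ∉
        (Finset.range (4*q-1)).image fun n => (s16h q n : S16Itm q X) := by simp [s16b, s16h]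
    have hjU : (s16j q j : S16Itm q X) ∉ insert (s16b q j true)
        ((Finset.range (4*q-1)).image fun n => (s16h q n : S16Itm q X)) := by
      simp [s16j, s16b, s16h]
    have hcard : U.card = 4*q+1 := by
      rw [hUdef, Finset.card_insert_of_notMem hjU, Finset.card_insert_of_notMem hb1img, himg]
      omega
    have hsub : ∀ v ∈ U, v ∈ VertsOf (s16A q cx cy cz (.inr (.inr (.inl j)))) ∧
        ¬∃ u, u ∈ π (.inr (.inr (.inl j))) ∧
          u ∈ VertsOf (s16A q cx cy cz (.inr (.inr (.inl j)))) ∧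
          Dominates (s16A q cx cy cz (.inr (.inr (.inl j)))) u v := by
      intro v hv
      rw [hUdef] at hv
      rcases Finset.mem_insert.1 hv with rfl | hv
      · exact hjcase _ rfl
      rcases Finset.mem_insert.1 hv with rfl | hv
      · refine ⟨memV_B_b1 cx cy cz j, ?_⟩
        rintro ⟨u, huπ, -, hdom⟩
        rcases (dominates_iff (fun a b c => no2B cx cy cz j a b c)).1 hdom with rfl | harc
        · exact hb1 huπ
        · simp only [s16A, Set.mem_setOf_eq, Prod.mk.injEq] at harc
          rcases harc with ⟨-, heq⟩ | ⟨rfl, -⟩ | ⟨t, -, -, heq⟩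
          · simp [s16b] at heq
          · exact hH 0 (by omega) _ (fun r => by simp) huπ
          · simp [s16b, s16h] at heq
      · obtain ⟨n, hn, rfl⟩ := Finset.mem_image.1 hv
        rw [Finset.mem_range] at hn
        exact hhcase n (by omega)
    have h1 := le_dissat hsub
    rw [hcard] at h1
    have h2 := hdis (.inr (.inr (.inl j)))
    omega
lemma bwd_xyz (hq2 : 2 ≤ q) (π : S16Agt q → Set (S16Itm q X)) (halloc : IsAllocation π)
    (hdis : ∀ a, dissat (VertsOf (s16A q cx cy cz a)) (s16A q cx cy cz a) (π a) ≤ 4*q)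
    (hH : ∀ (n:ℕ), n < 4*q+1 → ∀ a : S16Agt q, (∀ r, a ≠ .inl r) →
      (s16h q n : S16Itm q X) ∉ π a)
    (j : Fin (3*q)) (hxy : cx j ≠ cy j) (hxz : cx j ≠ cz j) (hyz : cy j ≠ cz j)
    (hb0 : s16b q j false ∈ π (.inr (.inr (.inl j))))
    (hb1 : s16b q j true ∈ π (.inr (.inr (.inl j)))) :
    s16x q (cx j) ∈ π (.inr (.inr (.inr j))) ∧ s16x q (cy j) ∈ π (.inr (.inr (.inr j))) ∧
      s16x q (cz j) ∈ π (.inr (.inr (.inr j))) := by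
  classical
  have hBneC : (.inr (.inr (.inl j)) : S16Agt q) ≠ .inr (.inr (.inr j)) := by simp
  have hb0C : s16b q j false ∉ π (.inr (.inr (.inr j))) :=
    fun h => Set.disjoint_left.1 (halloc hBneC) hb0 h
  have hb1C : s16b q j true ∉ π (.inr (.inr (.inr j))) :=
    fun h => Set.disjoint_left.1 (halloc hBneC) hb1 h
  have himg : ((Finset.range (4*q-2)).image fun n => (s16h q n : S16Itm q X)).card = 4*q-2 := by
    have hinj1 : Set.InjOn (fun n => (s16h q n : S16Itm q X)) (Finset.range (4*q-2)) := by
      intro a ha b hb h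
      rw [Finset.coe_range, Set.mem_Iio] at ha hb
      exact hinj (by omega) (by omega) h
    rw [Finset.card_image_of_injOn hinj1, Finset.card_range]
  have hb0case : (s16b q j false : S16Itm q X) ∈
        VertsOf (s16A q cx cy cz (.inr (.inr (.inr j)))) ∧
      ¬∃ u, u ∈ π (.inr (.inr (.inr j))) ∧
        u ∈ VertsOf (s16A q cx cy cz (.inr (.inr (.inr j)))) ∧
        Dominates (s16A q cx cy cz (.inr (.inr (.inr j)))) u (s16b q j false) := by
    refine ⟨memV_C_b0 cx cy cz j, ?_⟩
    rintro ⟨u, huπ, -, hdom⟩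
    rcases (dominates_iff (fun a b c => no2C cx cy cz hq2 j a b c)).1 hdom with rfl | harc
    · exact hb0C huπ
    · simp only [s16A, Set.mem_setOf_eq, Prod.mk.injEq] at harc
      rcases harc with ⟨-, heq⟩ | ⟨-, heq⟩ | ⟨-, heq⟩ | ⟨t, -, -, heq⟩ | ⟨-, heq⟩ <;>
        simp [s16b, s16x, s16h, s16e] at heq
  have hb1case : (s16b q j true : S16Itm q X) ∈
        VertsOf (s16A q cx cy cz (.inr (.inr (.inr j)))) ∧
      ¬∃ u, u ∈ π (.inr (.inr (.inr j))) ∧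
        u ∈ VertsOf (s16A q cx cy cz (.inr (.inr (.inr j)))) ∧
        Dominates (s16A q cx cy cz (.inr (.inr (.inr j)))) u (s16b q j true) := by
    refine ⟨memV_C_b1 cx cy cz j, ?_⟩
    rintro ⟨u, huπ, -, hdom⟩
    rcases (dominates_iff (fun a b c => no2C cx cy cz hq2 j a b c)).1 hdom with rfl | harc
    · exact hb1C huπ
    · simp only [s16A, Set.mem_setOf_eq, Prod.mk.injEq] at harc
      rcases harc with ⟨-, heq⟩ | ⟨-, heq⟩ | ⟨-, heq⟩ | ⟨t, -, -, heq⟩ | ⟨-, heq⟩ <;>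
        simp [s16b, s16x, s16h, s16e] at heq
  have hhcase : ∀ n : ℕ, n ≤ 4*q-3 →
      (s16h q n : S16Itm q X) ∈ VertsOf (s16A q cx cy cz (.inr (.inr (.inr j)))) ∧
      ¬∃ u, u ∈ π (.inr (.inr (.inr j))) ∧
        u ∈ VertsOf (s16A q cx cy cz (.inr (.inr (.inr j)))) ∧
        Dominates (s16A q cx cy cz (.inr (.inr (.inr j)))) u (s16h q n) := by
    intro n hn
    refine ⟨memV_C_h cx cy cz hq2 j hn, ?_⟩
    rintro ⟨u, huπ, -, hdom⟩
    rcases (dominates_iff (fun a b c => no2C cx cy cz hq2 j a b c)).1 hdom with rfl | harc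
    · exact hH n (by omega) _ (fun r => by simp) huπ
    · simp only [s16A, Set.mem_setOf_eq, Prod.mk.injEq] at harc
      rcases harc with ⟨-, heq⟩ | ⟨-, heq⟩ | ⟨-, heq⟩ | ⟨t, ht, rfl, -⟩ | ⟨-, heq⟩
      · simp [s16x, s16h] at heq
      · simp [s16x, s16h] at heq
      · simp [s16x, s16h] at heq
      · exact hH (2*t+1) (by omega) _ (fun r => by simp) huπ
      · simp [s16e, s16h] at heq
  have main : ∀ w : S16Itm q X,
      (w ∈ VertsOf (s16A q cx cy cz (.inr (.inr (.inr j))))) →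
      (¬∃ u, u ∈ π (.inr (.inr (.inr j))) ∧
        u ∈ VertsOf (s16A q cx cy cz (.inr (.inr (.inr j)))) ∧
        Dominates (s16A q cx cy cz (.inr (.inr (.inr j)))) u w) →
      (w ∉ ((Finset.range (4*q-2)).image fun n => (s16h q n : S16Itm q X))) →
      w ≠ s16b q j false → w ≠ s16b q j true → False := by
    intro w hwV hwns hwimg hwb0 hwb1
    set U := insert w (insert (s16b q j false) (insert (s16b q j true)
      ((Finset.range (4*q-2)).image fun n => (s16h q n : S16Itm q X)))) with hUdef
    have hcard : U.card = 4*q+1 := by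
      rw [hUdef, Finset.card_insert_of_notMem, Finset.card_insert_of_notMem,
        Finset.card_insert_of_notMem, himg]
      · omega
      · simp [s16b, s16h]
      · simp only [Finset.mem_insert]
        push_neg
        refine ⟨by simp [s16b], by simp [s16b, s16h]⟩
      · simp only [Finset.mem_insert]
        push_neg
        exact ⟨hwb0, hwb1, hwimg⟩
    have hsub : ∀ v ∈ U, v ∈ VertsOf (s16A q cx cy cz (.inr (.inr (.inr j)))) ∧
        ¬∃ u, u ∈ π (.inr (.inr (.inr j))) ∧
          u ∈ VertsOf (s16A q cx cy cz (.inr (.inr (.inr j)))) ∧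
          Dominates (s16A q cx cy cz (.inr (.inr (.inr j)))) u v := by
      intro v hv
      rw [hUdef] at hv
      rcases Finset.mem_insert.1 hv with rfl | hv
      · exact ⟨hwV, hwns⟩
      rcases Finset.mem_insert.1 hv with rfl | hv
      · exact hb0case
      rcases Finset.mem_insert.1 hv with rfl | hv
      · exact hb1case
      · obtain ⟨n, hn, rfl⟩ := Finset.mem_image.1 hv
        rw [Finset.mem_range] at hn
        exact hhcase n (by omega)
    have h1 := le_dissat hsub
    rw [hcard] at h1
    have h2 := hdis (.inr (.inr (.inr j)))
    omega
  refine ⟨?_, ?_, ?_⟩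
  · by_contra hw
    refine main (s16x q (cx j)) (memV_C_x cx cy cz j) ?_ (by simp [s16x, s16h])
      (by simp [s16x, s16b]) (by simp [s16x, s16b])
    rintro ⟨u, huπ, -, hdom⟩
    rcases (dominates_iff (fun a b c => no2C cx cy cz hq2 j a b c)).1 hdom with rfl | harc
    · exact hw huπ
    · simp only [s16A, Set.mem_setOf_eq, Prod.mk.injEq] at harc
      rcases harc with ⟨rfl, -⟩ | ⟨-, heq⟩ | ⟨-, heq⟩ | ⟨t, -, -, heq⟩ | ⟨-, heq⟩
      · exact hb0C huπ
      · simp only [s16x, Sum.inl.injEq] at heq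
        exact hxy heq
      · simp only [s16x, Sum.inl.injEq] at heq
        exact hxz heq
      · simp [s16x, s16h] at heq
      · simp [s16x, s16e] at heq
  · by_contra hw
    refine main (s16x q (cy j)) (memV_C_y cx cy cz j) ?_ (by simp [s16x, s16h])
      (by simp [s16x, s16b]) (by simp [s16x, s16b])
    rintro ⟨u, huπ, -, hdom⟩
    rcases (dominates_iff (fun a b c => no2C cx cy cz hq2 j a b c)).1 hdom with rfl | harc
    · exact hw huπ
    · simp only [s16A, Set.mem_setOf_eq, Prod.mk.injEq] at harc
      rcases harc with ⟨-, heq⟩ | ⟨rfl, -⟩ | ⟨-, heq⟩ | ⟨t, -, -, heq⟩ | ⟨-, heq⟩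
      · simp only [s16x, Sum.inl.injEq] at heq
        exact hxy heq.symm
      · exact hb1C huπ
      · simp only [s16x, Sum.inl.injEq] at heq
        exact hyz heq
      · simp [s16x, s16h] at heq
      · simp [s16x, s16e] at heq
  · by_contra hw
    refine main (s16x q (cz j)) (memV_C_z cx cy cz j) ?_ (by simp [s16x, s16h])
      (by simp [s16x, s16b]) (by simp [s16x, s16b])
    rintro ⟨u, huπ, -, hdom⟩
    rcases (dominates_iff (fun a b c => no2C cx cy cz hq2 j a b c)).1 hdom with rfl | harc
    · exact hw huπ
    · simp only [s16A, Set.mem_setOf_eq, Prod.mk.injEq] at harc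
      rcases harc with ⟨-, heq⟩ | ⟨-, heq⟩ | ⟨rfl, -⟩ | ⟨t, -, -, heq⟩ | ⟨-, heq⟩
      · simp only [s16x, Sum.inl.injEq] at heq
        exact hxz heq.symm
      · simp only [s16x, Sum.inl.injEq] at heq
        exact hyz heq.symm
      · exact hH 0 (by omega) _ (fun r => by simp) huπ
      · simp [s16x, s16h] at heq
      · simp [s16x, s16e] at heq
end
theorem stmt16 {X : Type*} [Fintype X] [DecidableEq X] (q : ℕ) (hq : 6 ≤ 3*q)
    (hX : Fintype.card X = 3*q)
    (C : Fin (3*q) → Finset X) (hC3 : ∀ j, (C j).card = 3)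
    (hocc : ∀ x : X, (Finset.univ.filter fun j => x ∈ C j).card = 3)
    (cx cy cz : Fin (3*q) → X)
    (hcxyz : ∀ j, (C j : Set X) = {cx j, cy j, cz j}) :
    (∃ S : Set (Fin (3*q)), ∀ x : X, ∃! j, j ∈ S ∧ x ∈ C j) ↔
    (∃ π : S16Agt q → Set (S16Itm q X), IsAllocation π ∧
      ∀ a, dissat (VertsOf (s16A q cx cy cz a)) (s16A q cx cy cz a) (π a) ≤ 4*q) := by
  have hq2 : 2 ≤ q := by omega
  constructor
  · rintro ⟨S, hS⟩
    refine ⟨s16pi q cx cy cz S, s16pi_alloc cx cy cz S hS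
      (fun j => by rw [← Finset.mem_coe, hcxyz j]; simp)
      (fun j => by rw [← Finset.mem_coe, hcxyz j]; simp)
      (fun j => by rw [← Finset.mem_coe, hcxyz j]; simp), ?_⟩
    have hTcard := cover_card hX C hC3 S hS (Set.toFinite S).toFinset
      (fun j => Set.Finite.mem_toFinset _)
    rintro (r | ⟨⟩ | j | j)
    · exact fwdD cx cy cz S r
    · exact fwdF cx cy cz S _ (fun j => Set.Finite.mem_toFinset _) (le_of_eq hTcard.symm)
    · exact fwdB cx cy cz hq2 S j
    · exact fwdC cx cy cz hq2 S j
  · rintro ⟨π, halloc, hdis⟩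
    have hH : ∀ (n:ℕ), n < 4*q+1 → ∀ a : S16Agt q, (∀ r, a ≠ .inl r) →
        (s16h q n : S16Itm q X) ∉ π a :=
      fun n hn a ha => bwd_h cx cy cz π halloc hdis hn ha
    obtain ⟨T, hTmem, hTq⟩ := bwd_T cx cy cz π halloc hdis hH
    have hdist : ∀ j : Fin (3*q), cx j ≠ cy j ∧ cx j ≠ cz j ∧ cy j ≠ cz j := by
      intro j
      apply three_distinct
      rw [← hcxyz j, Set.ncard_coe_finset, hC3 j]
    have hxmem : ∀ j ∈ T, ∀ x ∈ C j, (s16x q x : S16Itm q X) ∈ π (.inr (.inr (.inr j))) := by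
      intro j hj x hx
      obtain ⟨hb0, hb1⟩ := bwd_b cx cy cz hq2 π halloc hdis hH j ((hTmem j).1 hj)
      obtain ⟨h1, h2, h3⟩ := bwd_xyz cx cy cz hq2 π halloc hdis hH j (hdist j).1
        (hdist j).2.1 (hdist j).2.2 hb0 hb1
      have hx' : x ∈ ({cx j, cy j, cz j} : Set X) := by rw [← hcxyz j]; exact hx
      simp only [Set.mem_insert_iff, Set.mem_singleton_iff] at hx'
      rcases hx' with rfl | rfl | rfl
      exacts [h1, h2, h3]
    have huniq : ∀ j ∈ T, ∀ j' ∈ T, ∀ x : X, x ∈ C j → x ∈ C j' → j = j' := by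
      intro j hj j' hj' x hx hx'
      by_contra hne
      have hagne : (.inr (.inr (.inr j)) : S16Agt q) ≠ .inr (.inr (.inr j')) := by
        simpa using hne
      exact Set.disjoint_left.1 (halloc hagne) (hxmem j hj x hx) (hxmem j' hj' x hx')
    have hdisj : ∀ a ∈ T, ∀ b ∈ T, a ≠ b → Disjoint (C a) (C b) := by
      intro a ha b hb hne
      rw [Finset.disjoint_left]
      intro x hx hx'
      exact hne (huniq a ha b hb x hx hx')
    have hbU := Finset.card_biUnion hdisj
    have hsum : ∑ j ∈ T, (C j).card = 3 * T.card := by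
      rw [Finset.sum_congr rfl fun j _ => hC3 j]
      simp [mul_comm]
    have hle : (T.biUnion C).card ≤ 3*q := by
      calc (T.biUnion C).card ≤ Finset.univ.card := Finset.card_le_univ _
        _ = 3*q := by rw [Finset.card_univ, hX]
    have huniv : T.biUnion C = Finset.univ := by
      apply Finset.eq_univ_of_card
      rw [hX, hbU, hsum]
      rw [hbU, hsum] at hle
      omega
    refine ⟨↑T, fun x => ?_⟩
    have hx : x ∈ T.biUnion C := huniv ▸ Finset.mem_univ x
    obtain ⟨j, hjT, hxj⟩ := Finset.mem_biUnion.1 hx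
    refine ⟨j, ⟨Finset.mem_coe.2 hjT, hxj⟩, ?_⟩
    rintro j' ⟨hj'T, hxj'⟩
    exact huniq j' (Finset.mem_coe.1 hj'T) j hjT x hxj' hxj
end
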